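/- arXiv:1811.01816 — 6 statements merged into one kernel-verified Lean document; each statement's English description precedes it below -/
import Mathlib

section
/- Let (X,w) be a pure d-dimensional simplicial complex on {1,…,n} with a balanced weight function, and suppose (X,w) is a 0-local spectral expander. Fix 1 ≤ k < d, let D_k be the diagonal matrix indexed by X(k) with entries w(τ), and let Q_k = D_k^{1/2}·P_k^∧·D_k^{−1/2}, which is a symmetric matrix. Then for every 0 ≤ i ≤ k, Q_k has at most |X(i)| eigenvalues, counted with multiplicity, strictly greater than 1 − (i+1)/(k+1). In particular (taking i = 0, with |X(0)| = 1), the second largest eigenvalue of Q_k is at most k/(k+1). -/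
open Matrix Finset
open scoped Classical

noncomputable section

variable (n : ℕ)

/-- `X` is a pure `d`-dimensional simplicial complex on `{1,…,n}`:
nonempty, downward closed, and every face is contained in a face of cardinality `d`. -/
def IsPureComplex (X : Finset (Finset (Fin n))) (d : ℕ) : Prop :=
  X.Nonempty ∧ (∀ σ ∈ X, ∀ τ ⊆ σ, τ ∈ X) ∧
    (∀ σ ∈ X, ∃ ρ ∈ X, ρ.card = d ∧ σ ⊆ ρ)

/-- `w` is a balanced weight function on the pure `d`-dimensional complex `X`. -/
def IsBalanced (X : Finset (Finset (Fin n))) (d : ℕ) (w : Finset (Fin n) → ℝ) : Prop :=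
  (∀ τ ∈ X, 0 < w τ) ∧
    (∀ τ ∈ X, τ.card < d →
      w τ = ∑ σ ∈ X.filter (fun σ => τ ⊆ σ ∧ σ.card = τ.card + 1), w σ)

/-- The (zero-padded) weighted adjacency matrix of the 1-skeleton of the link `X_τ`:
entry `(i,j)` is `w(τ∪{i,j})` when `i ≠ j`, `i,j ∉ τ` and `τ∪{i,j} ∈ X`, and `0` otherwise. -/
def linkMat (X : Finset (Finset (Fin n))) (w : Finset (Fin n) → ℝ)
    (τ : Finset (Fin n)) : Matrix (Fin n) (Fin n) ℝ :=
  Matrix.of fun i j =>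
    if i ≠ j ∧ i ∉ τ ∧ j ∉ τ ∧ insert i (insert j τ) ∈ X then w (insert i (insert j τ)) else 0

/-- `(X,w)` is a 0-local spectral expander: for every face `τ` of cardinality at most `d−2`,
the link adjacency matrix `A_τ` has at most one strictly positive eigenvalue
(counted with multiplicity). -/
def IsZeroLSE (X : Finset (Finset (Fin n))) (d : ℕ) (w : Finset (Fin n) → ℝ) : Prop :=
  ∀ τ ∈ X, τ.card ≤ d - 2 →
    ∀ hA : (linkMat n X w τ).IsHermitian,
      (Finset.univ.filter fun i => 0 < hA.eigenvalues i).card ≤ 1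

/-- The faces of cardinality `k`, as a type. -/
abbrev Face (X : Finset (Finset (Fin n))) (k : ℕ) := {τ : Finset (Fin n) // τ ∈ X ∧ τ.card = k}

/-- The upper walk matrix `P_k^∧`, indexed by `X(k)`. -/
def Pup (X : Finset (Finset (Fin n))) (w : Finset (Fin n) → ℝ) (k : ℕ) :
    Matrix (Face n X k) (Face n X k) ℝ :=
  Matrix.of fun τ σ =>
    if τ = σ then 1 / ((k : ℝ) + 1)
    else if τ.1 ∪ σ.1 ∈ X ∧ (τ.1 ∪ σ.1).card = k + 1 then
      w (τ.1 ∪ σ.1) / (((k : ℝ) + 1) * w τ.1)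
    else 0

/-- The lower walk matrix `P_k^∨`, indexed by `X(k)`. -/
def Pdown (X : Finset (Finset (Fin n))) (w : Finset (Fin n) → ℝ) (k : ℕ) :
    Matrix (Face n X k) (Face n X k) ℝ :=
  Matrix.of fun σ σ' =>
    if σ = σ' then ∑ τ ∈ X.filter (fun τ => τ ⊆ σ.1 ∧ τ.card = k - 1), w σ.1 / ((k : ℝ) * w τ)
    else if σ.1 ∩ σ'.1 ∈ X ∧ (σ.1 ∩ σ'.1).card = k - 1 then
      w σ'.1 / ((k : ℝ) * w (σ.1 ∩ σ'.1))
    else 0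


/-- The symmetrized upper walk matrix `Q_k = D_k^{1/2} P_k^∧ D_k^{-1/2}`. -/
def Qup (X : Finset (Finset (Fin n))) (w : Finset (Fin n) → ℝ) (k : ℕ) :
    Matrix (Face n X k) (Face n X k) ℝ :=
  Matrix.of fun τ σ => Real.sqrt (w τ.1) * Pup n X w k τ σ / Real.sqrt (w σ.1)

/-!
Garland's method. For `ρ ∈ X(k)`, the matrix `liftMat ρ` sends a vector on `X(k+1)` to a vector
on the vertices of the link of `ρ`, and the link quadratic forms add up to
`(k+2) Q_{k+1} = I + ∑_ρ L_ρᵀ A_ρ L_ρ`. Since `A_ρ` has at most one positive eigenvalue and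
`𝟙ᵀ A_ρ 𝟙 = w(ρ) > 0`, a reverse Cauchy–Schwarz inequality bounds the term of `ρ` by
`((Vᵀ x)_ρ)²`, where `V` is the weighted inclusion matrix `X(k+1) × X(k)` with
`VᵀV = (k+1) Q_k`. Hence `(k+2) Q_{k+1} ≤ I + VVᵀ`, and as `VVᵀ` and `VᵀV` share their
positive spectrum, `Q_{k+1}` has at most as many eigenvalues above `1 - (i+1)/(k+2)` as `Q_k`
has above `1 - (i+1)/(k+1)`. Induction on `k` ends at `i = k`, where `|X(k)|` bounds everything.

Eigenvalue counts are handled as positive indices of inertia (`sigPos`) of the quadratic forms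
`x ↦ xᵀ (Q - t I) x`, which are monotone under linear maps preserving positivity.
-/

lemma sigPos_le_of_pos_map {𝕜 M M' : Type*} [Field 𝕜] [LinearOrder 𝕜]
    [AddCommGroup M] [Module 𝕜 M] [FiniteDimensional 𝕜 M]
    [AddCommGroup M'] [Module 𝕜 M'] [FiniteDimensional 𝕜 M']
    {Q : QuadraticForm 𝕜 M} {Q' : QuadraticForm 𝕜 M'} (f : M →ₗ[𝕜] M')
    (hf : ∀ x, 0 < Q x → 0 < Q' (f x)) : sigPos Q ≤ sigPos Q' := by
  obtain ⟨V, hV, hQV⟩ := exists_finrank_eq_sigPos_and_posDef Q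
  have hinj : Function.Injective (f ∘ₗ V.subtype) := by
    rw [← LinearMap.ker_eq_bot, LinearMap.ker_eq_bot']
    intro x hx
    by_contra hx0
    exact (hf x (hQV x hx0)).ne' (by simp [show f x = 0 from hx])
  rw [← hV, ← LinearMap.finrank_range_of_inj hinj]
  refine le_sigPos_of_posDef Q' fun ⟨y, x, hx⟩ hy => ?_
  subst hx
  exact hf x (hQV x fun h => hy (by simp [h]))

namespace Matrix

section Fintype

variable {m : Type*} [Fintype m]

lemma mul_dotProduct_lt_of_mul_dotProduct_self_lt {x z : m → ℝ} {s : ℝ} (hs : 0 ≤ s)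
    (h : s * (x ⬝ᵥ x) < x ⬝ᵥ z) : s * (x ⬝ᵥ z) < z ⬝ᵥ z := by
  have hcs : (x ⬝ᵥ z) ^ 2 ≤ (x ⬝ᵥ x) * (z ⬝ᵥ z) := by
    simpa [dotProduct, sq] using sum_mul_sq_le_sq_mul_sq univ x z
  have hxx : 0 ≤ x ⬝ᵥ x := sum_nonneg fun i _ => mul_self_nonneg (x i)
  have hxz : 0 < x ⬝ᵥ z := (mul_nonneg hs hxx).trans_lt h
  have hxx' : 0 < x ⬝ᵥ x := by
    refine hxx.lt_of_ne fun h0 => ?_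
    rw [← h0, zero_mul] at hcs
    exact (pow_pos hxz 2).not_ge hcs
  nlinarith

lemma IsHermitian.dotProduct_mulVec_comm {A : Matrix m m ℝ} (hA : A.IsHermitian)
    (x y : m → ℝ) : x ⬝ᵥ (A *ᵥ y) = y ⬝ᵥ (A *ᵥ x) := by
  rw [dotProduct_mulVec, ← mulVec_transpose, ← conjTranspose_eq_transpose_of_trivial, hA.eq,
    dotProduct_comm]

end Fintype

variable {m m' : Type*} [Fintype m] [Fintype m'] [DecidableEq m] [DecidableEq m']

lemma toQuadraticForm'_sub_smul_one_apply (A : Matrix m m ℝ) (t : ℝ) (x : m → ℝ) :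
    (A - t • 1).toQuadraticForm' x = x ⬝ᵥ (A *ᵥ x) - t * (x ⬝ᵥ x) := by
  simp [toQuadraticForm', toLinearMap₂'_apply']

lemma sigPos_mul_transpose_sub_le {V : Matrix m m' ℝ} {s : ℝ} (hs : 0 ≤ s) :
    sigPos (V * Vᵀ - s • 1).toQuadraticForm' ≤
      sigPos (Vᵀ * V - s • 1).toQuadraticForm' := by
  refine sigPos_le_of_pos_map Vᵀ.mulVecLin fun x hx => ?_
  simp only [toQuadraticForm'_sub_smul_one_apply, mulVecLin_apply, sub_pos] at hx ⊢
  have hVx : x ⬝ᵥ (V *ᵥ (Vᵀ *ᵥ x)) = (Vᵀ *ᵥ x) ⬝ᵥ (Vᵀ *ᵥ x) := by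
    rw [dotProduct_mulVec, ← mulVec_transpose]
  have hVVx : (Vᵀ *ᵥ x) ⬝ᵥ ((Vᵀ * V) *ᵥ (Vᵀ *ᵥ x)) =
      (V *ᵥ (Vᵀ *ᵥ x)) ⬝ᵥ (V *ᵥ (Vᵀ *ᵥ x)) := by
    rw [← mulVec_mulVec, dotProduct_mulVec, ← mulVec_transpose, transpose_transpose]
  rw [← mulVec_mulVec] at hx
  rw [hVVx, ← hVx]
  exact mul_dotProduct_lt_of_mul_dotProduct_self_lt hs hx

namespace IsHermitian

variable {A : Matrix m m ℝ}

lemma dotProduct_mulVec_eq_sum (hA : A.IsHermitian) (x : m → ℝ) :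
    x ⬝ᵥ (A *ᵥ x) =
      ∑ i, hA.eigenvalues i * (star (hA.eigenvectorUnitary : Matrix m m ℝ) *ᵥ x) i ^ 2 := by
  set U : Matrix m m ℝ := (hA.eigenvectorUnitary : Matrix m m ℝ)
  have hU : x ᵥ* U = star U *ᵥ x := by
    rw [star_eq_conjTranspose, conjTranspose_eq_transpose_of_trivial, mulVec_transpose]
  have hA' : A = U * diagonal hA.eigenvalues * star U := by
    simpa using hA.spectral_theorem
  conv_lhs => rw [hA']
  rw [← mulVec_mulVec, ← mulVec_mulVec, dotProduct_mulVec, hU]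
  simp [dotProduct, mulVec_diagonal, sq, mul_left_comm]

lemma dotProduct_self_eq_sum (hA : A.IsHermitian) (x : m → ℝ) :
    x ⬝ᵥ x = ∑ i, (star (hA.eigenvectorUnitary : Matrix m m ℝ) *ᵥ x) i ^ 2 := by
  set U : Matrix m m ℝ := (hA.eigenvectorUnitary : Matrix m m ℝ)
  have hU : (star U *ᵥ x) ᵥ* star U = U *ᵥ (star U *ᵥ x) := by
    rw [star_eq_conjTranspose, conjTranspose_eq_transpose_of_trivial, vecMul_transpose]
  have hUU : U * star U = 1 := Unitary.mul_star_self_of_mem hA.eigenvectorUnitary.2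
  simp only [sq, ← dotProduct.eq_1]
  rw [dotProduct_mulVec, hU, mulVec_mulVec, hUU, one_mulVec, dotProduct_comm]

lemma sigPos_toQuadraticForm'_sub_smul_one (hA : A.IsHermitian) (t : ℝ) :
    sigPos (A - t • 1).toQuadraticForm' = #{i | t < hA.eigenvalues i} := by
  set U : Matrix m m ℝ := (hA.eigenvectorUnitary : Matrix m m ℝ)
  have hU := hA.eigenvectorUnitary.2
  let e : (m → ℝ) ≃ₗ[ℝ] (m → ℝ) :=
    LinearEquiv.ofLinearMap (f := (star U).mulVecLin) (g := U.mulVecLin)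
      (by rw [← mulVecLin_mul, Unitary.star_mul_self_of_mem hU, mulVecLin_one])
      (by rw [← mulVecLin_mul, Unitary.mul_star_self_of_mem hU, mulVecLin_one])
  have hQ : (A - t • 1).toQuadraticForm'.Equivalent
      (QuadraticMap.weightedSumSquares ℝ fun i => hA.eigenvalues i - t) := by
    refine ⟨⟨e, fun x => ?_⟩⟩
    simp only [toQuadraticForm'_sub_smul_one_apply, QuadraticMap.weightedSumSquares_apply,
      hA.dotProduct_mulVec_eq_sum, hA.dotProduct_self_eq_sum, smul_eq_mul, mul_sum,
      ← sum_sub_distrib]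
    refine sum_congr rfl fun i _ => ?_
    simp only [LinearEquiv.toLinearMap_ofLinearMap, AddHom.toFun_eq_coe, LinearMap.coe_toAddHom,
      mulVecLin_apply, e, U]
    ring
  rw [QuadraticForm.sigPos_of_equiv_weightedSumSquares hQ, ← Set.ncard_coe_finset]
  congr 1
  ext i
  simp

/-- Reverse Cauchy–Schwarz: otherwise the form of `A` would be positive definite on the span of
`x` and `y`, which has dimension two. -/
lemma dotProduct_mulVec_mul_le_sq (hA : A.IsHermitian) (hpos : #{i | 0 < hA.eigenvalues i} ≤ 1)
    {y : m → ℝ} (hy : 0 < y ⬝ᵥ (A *ᵥ y)) (x : m → ℝ) :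
    (x ⬝ᵥ (A *ᵥ x)) * (y ⬝ᵥ (A *ᵥ y)) ≤ (x ⬝ᵥ (A *ᵥ y)) ^ 2 := by
  by_contra! h
  let f := Fintype.linearCombination ℝ ![x, y]
  have hQf : (A.toQuadraticForm'.comp f).PosDef := by
    intro v hv
    have key : (y ⬝ᵥ (A *ᵥ y)) * A.toQuadraticForm'.comp f v =
        (v 0 * x ⬝ᵥ (A *ᵥ y) + v 1 * y ⬝ᵥ (A *ᵥ y)) ^ 2 + v 0 ^ 2 *
          ((x ⬝ᵥ (A *ᵥ x)) * (y ⬝ᵥ (A *ᵥ y)) - (x ⬝ᵥ (A *ᵥ y)) ^ 2) := by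
      simp only [QuadraticMap.comp_apply, toQuadraticForm', LinearMap.BilinMap.toQuadraticMap_apply,
        toLinearMap₂'_apply', f, Fintype.linearCombination_apply, Fin.sum_univ_two,
        cons_val_zero, cons_val_one, mulVec_add, mulVec_smul, dotProduct_add, add_dotProduct,
        dotProduct_smul, smul_dotProduct, smul_eq_mul, hA.dotProduct_mulVec_comm y x]
      ring
    refine pos_of_mul_pos_right (key ▸ ?_) hy.le
    rcases eq_or_ne (v 0) 0 with hv0 | hv0
    · have hv1 : v 1 ≠ 0 := fun hv1 => hv (funext fun i => by fin_cases i <;> simp [hv0, hv1])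
      rw [hv0, zero_mul, zero_add, zero_pow two_ne_zero, zero_mul, add_zero]
      positivity
    · exact add_pos_of_nonneg_of_pos (sq_nonneg _) (mul_pos (by positivity) (sub_pos.2 h))
  have h2 : 2 ≤ sigPos (A.toQuadraticForm'.comp f) := by
    simpa using le_sigPos_of_posDef (A.toQuadraticForm'.comp f) (V := ⊤)
      fun v hv => hQf v (by rwa [Ne, ← Submodule.coe_eq_zero] at hv)
  have h1 : sigPos A.toQuadraticForm' ≤ 1 := by
    simpa using (hA.sigPos_toQuadraticForm'_sub_smul_one 0).trans_le hpos
  have := (h2.trans (sigPos_le_of_pos_map f fun v hv => hv)).trans h1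
  omega

end IsHermitian

end Matrix

lemma Finset.lt_card_union_of_ne {α : Type*} [DecidableEq α] {s t : Finset α} {k : ℕ}
    (hs : s.card = k) (ht : t.card = k) (hst : s ≠ t) : k < (s ∪ t).card := by
  refine hs ▸ card_lt_card (ssubset_of_subset_of_ne subset_union_left fun h => hst ?_)
  exact (eq_of_subset_of_card_le (subset_union_right.trans h.symm.subset) (by rw [hs, ht])).symm

section Garland

variable {n} {d : ℕ} {X : Finset (Finset (Fin n))} {w : Finset (Fin n) → ℝ}

lemma sum_insert_eq_of_isBalanced (hw : IsBalanced n X d w) {τ : Finset (Fin n)} (hτ : τ ∈ X)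
    (hτd : τ.card < d) :
    ∑ i, (if i ∉ τ ∧ insert i τ ∈ X then w (insert i τ) else 0) = w τ := by
  have himage : X.filter (fun σ => τ ⊆ σ ∧ σ.card = τ.card + 1) =
      (univ.filter fun i => i ∉ τ ∧ insert i τ ∈ X).image (insert · τ) := by
    ext σ
    simp only [mem_filter, mem_image, mem_univ, true_and]
    constructor
    · rintro ⟨hσ, hτσ, hcard⟩
      obtain ⟨i, hi, rfl⟩ := exists_eq_insert_iff.2 ⟨hτσ, hcard.symm⟩
      exact ⟨i, ⟨hi, hσ⟩, rfl⟩
    · rintro ⟨i, ⟨hi, hσ⟩, rfl⟩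
      exact ⟨hσ, subset_insert _ _, card_insert_of_notMem hi⟩
  rw [hw.2 τ hτ hτd, himage, sum_image, sum_filter]
  intro i hi j hj hij
  exact (insert_inj (mem_filter.1 hi).2.1).1 hij

lemma isHermitian_linkMat (τ : Finset (Fin n)) : (linkMat n X w τ).IsHermitian := by
  refine IsHermitian.ext fun i j => ?_
  simp only [linkMat, of_apply, star_trivial, insert_comm i j]
  congr 1
  exact propext ⟨fun ⟨h1, h2, h3, h4⟩ => ⟨Ne.symm h1, h3, h2, h4⟩,
    fun ⟨h1, h2, h3, h4⟩ => ⟨Ne.symm h1, h3, h2, h4⟩⟩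

lemma linkMat_mulVec_one (hX : IsLowerSet (X : Set (Finset (Fin n)))) (hw : IsBalanced n X d w)
    {ρ : Finset (Fin n)} (hρd : ρ.card + 1 < d) (i : Fin n) :
    (linkMat n X w ρ *ᵥ 1) i =
      if i ∉ ρ ∧ insert i ρ ∈ X then w (insert i ρ) else 0 := by
  simp only [mulVec, dotProduct, Pi.one_apply, mul_one, linkMat, of_apply]
  split_ifs with hi
  · rw [← sum_insert_eq_of_isBalanced hw hi.2 (by rwa [card_insert_of_notMem hi.1])]
    refine sum_congr rfl fun j _ => ?_
    simp only [mem_insert, not_or, insert_comm i j]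
    congr 1
    exact propext ⟨fun ⟨h1, _, h3, h4⟩ => ⟨⟨Ne.symm h1, h3⟩, h4⟩,
      fun ⟨⟨h1, h3⟩, h4⟩ => ⟨Ne.symm h1, hi.1, h3, h4⟩⟩
  · exact sum_eq_zero fun j _ => if_neg fun ⟨_, h2, _, h4⟩ =>
      hi ⟨h2, hX (insert_subset_insert i (subset_insert j ρ)) h4⟩

lemma one_dotProduct_linkMat_mulVec_one (hX : IsLowerSet (X : Set (Finset (Fin n))))
    (hw : IsBalanced n X d w) {ρ : Finset (Fin n)} (hρ : ρ ∈ X) (hρd : ρ.card + 1 < d) :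
    1 ⬝ᵥ (linkMat n X w ρ *ᵥ 1) = w ρ := by
  simp only [one_dotProduct, linkMat_mulVec_one hX hw hρd]
  exact sum_insert_eq_of_isBalanced hw hρ (by omega)

lemma Qup_apply (hw : IsBalanced n X d w) {k : ℕ} (σ σ' : Face n X k) :
    Qup n X w k σ σ' =
      if σ = σ' then 1 / ((k : ℝ) + 1)
      else if σ.1 ∪ σ'.1 ∈ X ∧ (σ.1 ∪ σ'.1).card = k + 1 then
        w (σ.1 ∪ σ'.1) / (((k : ℝ) + 1) * (√(w σ.1) * √(w σ'.1)))
      else 0 := by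
  have hσ := hw.1 _ σ.2.1
  have hσ' := Real.sqrt_pos.2 (hw.1 _ σ'.2.1)
  simp only [Qup, Pup, of_apply]
  split_ifs with h
  · subst h; field_simp
  · field_simp
    rw [Real.sq_sqrt hσ.le, mul_comm]
  · simp

lemma isHermitian_Qup (hw : IsBalanced n X d w) (k : ℕ) : (Qup n X w k).IsHermitian := by
  refine IsHermitian.ext fun σ σ' => ?_
  simp only [Qup_apply hw, star_trivial, eq_comm (a := σ'), union_comm σ'.1,
    mul_comm (√(w σ'.1))]

variable (X w) in
/-- `D_{k+1}^{1/2} U D_k^{-1/2}`, for `U` the inclusion matrix of `X(k)` in `X(k+1)`. -/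
def upMat (k : ℕ) : Matrix (Face n X (k + 1)) (Face n X k) ℝ :=
  of fun σ ρ => if ρ.1 ⊆ σ.1 then √(w σ.1) / √(w ρ.1) else 0

lemma sum_face_eq_sum_filter {k : ℕ} (f : Finset (Fin n) → ℝ) :
    ∑ σ : Face n X k, f σ.1 = ∑ σ ∈ X.filter (·.card = k), f σ :=
  (sum_subtype _ (by simp) f).symm

lemma transpose_upMat_mul_upMat (hX : IsLowerSet (X : Set (Finset (Fin n))))
    (hw : IsBalanced n X d w) {k : ℕ} (hkd : k < d) :
    (upMat X w k)ᵀ * upMat X w k = ((k : ℝ) + 1) • Qup n X w k := by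
  ext ρ ρ'
  have hρ := hw.1 _ ρ.2.1
  have hρ' := hw.1 _ ρ'.2.1
  have hterm : ∀ σ : Face n X (k + 1), upMat X w k σ ρ * upMat X w k σ ρ' =
      if ρ.1 ∪ ρ'.1 ⊆ σ.1 then w σ.1 / (√(w ρ.1) * √(w ρ'.1)) else 0 := by
    intro σ
    simp only [upMat, of_apply, union_subset_iff]
    split_ifs <;> simp_all [div_mul_div_comm, Real.mul_self_sqrt (hw.1 _ σ.2.1).le]
  simp only [mul_apply, transpose_apply, hterm, Matrix.smul_apply, Qup_apply hw, smul_eq_mul]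
  rw [sum_face_eq_sum_filter fun σ =>
    if ρ.1 ∪ ρ'.1 ⊆ σ then w σ / (√(w ρ.1) * √(w ρ'.1)) else 0]
  split_ifs with h hU
  · subst h
    have hfaces : (X.filter (·.card = k + 1)).filter (ρ.1 ⊆ ·) =
        X.filter fun σ => ρ.1 ⊆ σ ∧ σ.card = ρ.1.card + 1 := by
      ext; simp only [mem_filter, ρ.2.2]; tauto
    rw [← sum_filter, ← sum_div, union_self, Real.mul_self_sqrt hρ.le, hfaces,
      ← hw.2 ρ ρ.2.1 (by omega)]
    field_simp
  · have hcard : ∀ σ ∈ X.filter (·.card = k + 1), (ρ.1 ∪ ρ'.1).card = σ.card := fun σ hσ => by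
      rw [(mem_filter.1 hσ).2, hU.2]
    rw [sum_eq_single_of_mem (ρ.1 ∪ ρ'.1) (mem_filter.2 hU) fun σ hσ hne => if_neg fun hsub =>
        hne (eq_of_subset_of_card_le hsub (hcard σ hσ).ge).symm,
      if_pos subset_rfl]
    field_simp
  · rw [mul_zero]
    refine sum_eq_zero fun σ hσ => if_neg fun hsub => hU ⟨hX hsub (mem_filter.1 hσ).1, ?_⟩
    have := card_le_card hsub
    have := lt_card_union_of_ne ρ.2.2 ρ'.2.2 (Subtype.coe_ne_coe.2 h)
    rw [(mem_filter.1 hσ).2] at *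
    omega

variable (X w) in
/-- Column `σ = ρ ∪ {i}` of `liftMat ρ` is `e_i / √(w σ)`: it carries a vector on `X(k+1)` to
the link of `ρ`. -/
def liftMat (k : ℕ) (ρ : Finset (Fin n)) : Matrix (Fin n) (Face n X (k + 1)) ℝ :=
  of fun i σ => if i ∉ ρ ∧ σ.1 = insert i ρ then (√(w σ.1))⁻¹ else 0

lemma liftMat_apply_of_eq_insert {k : ℕ} {ρ : Finset (Fin n)} {σ : Face n X (k + 1)}
    {i₀ : Fin n} (hi₀ : i₀ ∉ ρ) (hσ : σ.1 = insert i₀ ρ) (i : Fin n) :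
    liftMat X w k ρ i σ = if i = i₀ then (√(w σ.1))⁻¹ else 0 := by
  simp only [liftMat, of_apply, hσ]
  congr 1
  exact propext ⟨fun ⟨hi, h⟩ => (insert_inj hi).1 h.symm,
    fun h => by subst h; exact ⟨hi₀, rfl⟩⟩

lemma liftMat_apply_of_not_subset {k : ℕ} {ρ : Finset (Fin n)} {σ : Face n X (k + 1)}
    (hσ : ¬ ρ ⊆ σ.1) (i : Fin n) : liftMat X w k ρ i σ = 0 :=
  if_neg fun ⟨_, h⟩ => hσ (h ▸ subset_insert i ρ)

lemma liftMat_transpose_mul_linkMat_mul_liftMat_apply {k : ℕ} (ρ : Face n X k)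
    (σ σ' : Face n X (k + 1)) :
    ((liftMat X w k ρ)ᵀ * linkMat n X w ρ * liftMat X w k ρ) σ σ' =
      if ρ.1 ⊆ σ.1 ∧ ρ.1 ⊆ σ'.1 ∧ σ ≠ σ' ∧ σ.1 ∪ σ'.1 ∈ X then
        w (σ.1 ∪ σ'.1) / (√(w σ.1) * √(w σ'.1))
      else 0 := by
  by_cases hρσ : ρ.1 ⊆ σ.1
  · by_cases hρσ' : ρ.1 ⊆ σ'.1
    · obtain ⟨i, hi, hσi⟩ := exists_eq_insert_iff.2 ⟨hρσ, by rw [σ.2.2, ρ.2.2]⟩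
      obtain ⟨j, hj, hσj⟩ := exists_eq_insert_iff.2 ⟨hρσ', by rw [σ'.2.2, ρ.2.2]⟩
      have hunion : σ.1 ∪ σ'.1 = insert i (insert j ρ.1) := by
        rw [← hσi, ← hσj]; ext
        simp only [union_insert, insert_union, union_idempotent, mem_insert]; tauto
      have hne : σ ≠ σ' ↔ i ≠ j := by
        rw [Ne, Ne, ← Subtype.coe_inj, ← hσi, ← hσj, insert_inj hi]
      simp only [mul_apply, transpose_apply, liftMat_apply_of_eq_insert hi hσi.symm,
        liftMat_apply_of_eq_insert hj hσj.symm, ite_mul, mul_ite, zero_mul, mul_zero, sum_ite_eq',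
        mem_univ, if_true, linkMat, of_apply, hunion, hne, hρσ, hρσ', true_and]
      rw [sum_eq_single i (fun b _ hb => by simp [hb]) (by simp)]
      simp only [if_true, hi, hj, not_false_eq_true, true_and, ne_comm (a := i)]
      split_ifs <;> simp [div_eq_mul_inv, mul_comm, mul_assoc]
    · simp [mul_apply, liftMat_apply_of_not_subset hρσ', hρσ']
  · simp [mul_apply, liftMat_apply_of_not_subset hρσ, hρσ]

lemma smul_Qup_succ_eq_one_add_sum (hX : IsLowerSet (X : Set (Finset (Fin n))))
    (hw : IsBalanced n X d w) (k : ℕ) :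
    ((k : ℝ) + 2) • Qup n X w (k + 1) =
      1 + ∑ ρ : Face n X k,
        (liftMat X w k ρ.1)ᵀ * linkMat n X w ρ.1 * liftMat X w k ρ.1 := by
  ext σ σ'
  simp only [Matrix.smul_apply, Matrix.add_apply, Matrix.sum_apply, one_apply, smul_eq_mul,
    liftMat_transpose_mul_linkMat_mul_liftMat_apply, Qup_apply hw]
  push_cast
  by_cases hσσ' : σ = σ'
  · simp only [hσσ', if_true, ne_eq, not_true_eq_false, false_and, and_false, if_false,
      sum_const_zero, add_zero]
    field_simp
    ring
  have hcard := card_union_add_card_inter σ.1 σ'.1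
  have hlt := lt_card_union_of_ne σ.2.2 σ'.2.2 (Subtype.coe_ne_coe.2 hσσ')
  simp only [hσσ', if_false, ne_eq, not_false_eq_true, true_and, zero_add]
  split_ifs with hU
  · have hinter : (σ.1 ∩ σ'.1).card = k := by rw [σ.2.2, σ'.2.2] at hcard; omega
    let ρ₀ : Face n X k := ⟨σ.1 ∩ σ'.1, hX inter_subset_left σ.2.1, hinter⟩
    rw [sum_eq_single ρ₀ (fun ρ _ hρ => if_neg fun ⟨h, h', _⟩ => hρ (Subtype.ext
      (eq_of_subset_of_card_le (subset_inter h h') (by rw [hinter, ρ.2.2])))) (by simp),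
      if_pos ⟨inter_subset_left, inter_subset_right, hU.1⟩]
    field_simp
    ring
  · rw [mul_zero]
    refine (sum_eq_zero fun ρ _ => if_neg ?_).symm
    rintro ⟨h, h', hUX⟩
    refine hU ⟨hUX, ?_⟩
    have := card_le_card (subset_inter h h')
    rw [σ.2.2, σ'.2.2] at hcard
    rw [ρ.2.2] at this
    omega

lemma linkMat_mulVec_one_vecMul_liftMat (hX : IsLowerSet (X : Set (Finset (Fin n))))
    (hw : IsBalanced n X d w) {k : ℕ} (hkd : k + 1 < d) (ρ : Face n X k) :
    (linkMat n X w ρ.1 *ᵥ 1) ᵥ* liftMat X w k ρ.1 = √(w ρ.1) • (upMat X w k)ᵀ ρ := by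
  ext σ
  simp only [vecMul, dotProduct, linkMat_mulVec_one hX hw (ρ.2.2 ▸ hkd), Pi.smul_apply,
    transpose_apply, upMat, of_apply, smul_eq_mul]
  by_cases hρσ : ρ.1 ⊆ σ.1
  · obtain ⟨i, hi, hσi⟩ := exists_eq_insert_iff.2 ⟨hρσ, by rw [σ.2.2, ρ.2.2]⟩
    have hσ := hw.1 _ σ.2.1
    have hρ := Real.sqrt_pos.2 (hw.1 _ ρ.2.1)
    simp only [liftMat_apply_of_eq_insert hi hσi.symm, mul_ite, mul_zero, sum_ite_eq', mem_univ,
      if_true, hρσ]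
    rw [if_pos ⟨hi, hσi ▸ σ.2.1⟩, hσi]
    field_simp
    exact (Real.sq_sqrt hσ.le).symm
  · simp [liftMat_apply_of_not_subset hρσ, hρσ]

lemma dotProduct_liftMat_linkMat_liftMat_mulVec_le (hX : IsLowerSet (X : Set (Finset (Fin n))))
    (hw : IsBalanced n X d w) (hlse : IsZeroLSE n X d w) {k : ℕ} (hkd : k + 1 < d)
    (ρ : Face n X k) (x : Face n X (k + 1) → ℝ) :
    x ⬝ᵥ (((liftMat X w k ρ.1)ᵀ * linkMat n X w ρ.1 * liftMat X w k ρ.1) *ᵥ x) ≤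
      ((upMat X w k)ᵀ *ᵥ x) ρ ^ 2 := by
  set A := linkMat n X w ρ.1
  set y := liftMat X w k ρ.1 *ᵥ x
  have hρ := hw.1 _ ρ.2.1
  have hA := isHermitian_linkMat (X := X) (w := w) ρ.1
  have hA1 : 1 ⬝ᵥ (A *ᵥ 1) = w ρ.1 :=
    one_dotProduct_linkMat_mulVec_one hX hw ρ.2.1 (by rw [ρ.2.2]; exact hkd)
  have hy : y ⬝ᵥ (A *ᵥ 1) = √(w ρ.1) * ((upMat X w k)ᵀ *ᵥ x) ρ := by
    rw [dotProduct_comm, dotProduct_mulVec, linkMat_mulVec_one_vecMul_liftMat hX hw hkd,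
      smul_dotProduct, smul_eq_mul]
    rfl
  have hrcs := hA.dotProduct_mulVec_mul_le_sq (hlse _ ρ.2.1 (by omega) hA) (by rwa [hA1]) y
  rw [hA1, hy, mul_pow, Real.sq_sqrt hρ.le, mul_comm (w ρ.1)] at hrcs
  rw [← mulVec_mulVec, ← mulVec_mulVec, dotProduct_mulVec, vecMul_transpose]
  exact le_of_mul_le_mul_right hrcs hρ

lemma mul_dotProduct_Qup_succ_mulVec_le (hX : IsLowerSet (X : Set (Finset (Fin n))))
    (hw : IsBalanced n X d w) (hlse : IsZeroLSE n X d w) {k : ℕ} (hkd : k + 1 < d)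
    (x : Face n X (k + 1) → ℝ) :
    ((k : ℝ) + 2) * (x ⬝ᵥ (Qup n X w (k + 1) *ᵥ x)) ≤
      x ⬝ᵥ x + x ⬝ᵥ ((upMat X w k * (upMat X w k)ᵀ) *ᵥ x) := by
  rw [← smul_eq_mul, ← dotProduct_smul, ← smul_mulVec, smul_Qup_succ_eq_one_add_sum hX hw,
    add_mulVec, one_mulVec, dotProduct_add, sum_mulVec, dotProduct_sum, ← mulVec_mulVec,
    dotProduct_mulVec, ← mulVec_transpose]
  conv_rhs => rw [dotProduct]
  gcongr (x ⬝ᵥ x) + ?_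
  refine sum_le_sum fun ρ _ => ?_
  exact (dotProduct_liftMat_linkMat_liftMat_mulVec_le hX hw hlse hkd ρ x).trans_eq (sq _)

lemma sigPos_Qup_succ_le (hX : IsLowerSet (X : Set (Finset (Fin n)))) (hw : IsBalanced n X d w)
    (hlse : IsZeroLSE n X d w) {k i : ℕ} (hik : i ≤ k) (hkd : k + 1 < d) :
    sigPos (Qup n X w (k + 1) -
        (1 - ((i : ℝ) + 1) / (((k + 1 : ℕ) : ℝ) + 1)) • 1).toQuadraticForm' ≤
      sigPos (Qup n X w k - (1 - ((i : ℝ) + 1) / ((k : ℝ) + 1)) • 1).toQuadraticForm' := by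
  have hs : (0 : ℝ) ≤ k - i := sub_nonneg.2 (Nat.cast_le.2 hik)
  have h1 : sigPos (Qup n X w (k + 1) -
        (1 - ((i : ℝ) + 1) / (((k + 1 : ℕ) : ℝ) + 1)) • 1).toQuadraticForm' ≤
      sigPos (upMat X w k * (upMat X w k)ᵀ - ((k : ℝ) - i) • 1).toQuadraticForm' := by
    refine sigPos_le_of_pos_map LinearMap.id fun x hx => ?_
    have := mul_dotProduct_Qup_succ_mulVec_le hX hw hlse hkd x
    rw [toQuadraticForm'_sub_smul_one_apply, sub_pos] at hx
    rw [LinearMap.id_apply, toQuadraticForm'_sub_smul_one_apply, sub_pos]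
    push_cast at hx
    have hk : (0 : ℝ) < k + 2 := by positivity
    have e : ((k : ℝ) + 2) * ((1 - ((i : ℝ) + 1) / ((k : ℝ) + 1 + 1)) * (x ⬝ᵥ x)) =
        ((k : ℝ) + 1 - i) * (x ⬝ᵥ x) := by
      field_simp
      ring
    linarith [mul_lt_mul_of_pos_left hx hk]
  have h3 : sigPos ((upMat X w k)ᵀ * upMat X w k - ((k : ℝ) - i) • 1).toQuadraticForm' ≤
      sigPos (Qup n X w k - (1 - ((i : ℝ) + 1) / ((k : ℝ) + 1)) • 1).toQuadraticForm' := by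
    refine sigPos_le_of_pos_map LinearMap.id fun y hy => ?_
    rw [toQuadraticForm'_sub_smul_one_apply, sub_pos, transpose_upMat_mul_upMat hX hw (by omega),
      smul_mulVec, dotProduct_smul, smul_eq_mul] at hy
    rw [LinearMap.id_apply, toQuadraticForm'_sub_smul_one_apply, sub_pos]
    have hk : (0 : ℝ) < k + 1 := by positivity
    have e : ((k : ℝ) + 1) * ((1 - ((i : ℝ) + 1) / ((k : ℝ) + 1)) * (y ⬝ᵥ y)) =
        ((k : ℝ) - i) * (y ⬝ᵥ y) := by
      field_simp
      ring
    exact lt_of_mul_lt_mul_left (e ▸ hy) hk.le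
  exact h1.trans ((sigPos_mul_transpose_sub_le hs).trans h3)

lemma sigPos_le_card_faces {k : ℕ} (Q : QuadraticForm ℝ (Face n X k → ℝ)) :
    sigPos Q ≤ #(X.filter (·.card = k)) := by
  have hcard : Fintype.card (Face n X k) = #(X.filter (·.card = k)) :=
    Fintype.card_of_subtype _ fun τ => mem_filter
  simpa [hcard] using sigPos_le_finrank Q

lemma sigPos_Qup_le_card_faces (hX : IsLowerSet (X : Set (Finset (Fin n))))
    (hw : IsBalanced n X d w) (hlse : IsZeroLSE n X d w) {k : ℕ} (hkd : k < d) {i : ℕ}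
    (hik : i ≤ k) :
    sigPos (Qup n X w k - (1 - ((i : ℝ) + 1) / ((k : ℝ) + 1)) • 1).toQuadraticForm' ≤
      #(X.filter (·.card = i)) := by
  induction k with
  | zero => exact Nat.le_zero.1 hik ▸ sigPos_le_card_faces _
  | succ k ih =>
    rcases hik.lt_or_eq with hik | rfl
    · have hik := Nat.lt_succ_iff.1 hik
      exact (sigPos_Qup_succ_le hX hw hlse hik hkd).trans (ih (by omega) hik)
    · exact sigPos_le_card_faces _

end Garland

theorem stmt2_general (n d : ℕ) (X : Finset (Finset (Fin n))) (w : Finset (Fin n) → ℝ)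
    (hX : IsPureComplex n X d) (hw : IsBalanced n X d w) (hlse : IsZeroLSE n X d w)
    (k : ℕ) (hkd : k < d) :
    ∃ hQ : (Qup n X w k).IsHermitian,
      (∀ i : ℕ, i ≤ k →
        (Finset.univ.filter fun τ : Face n X k =>
            1 - ((i : ℝ) + 1) / ((k : ℝ) + 1) < hQ.eigenvalues τ).card
          ≤ (X.filter fun τ => τ.card = i).card) ∧
      (Finset.univ.filter fun τ : Face n X k =>
          (k : ℝ) / ((k : ℝ) + 1) < hQ.eigenvalues τ).card ≤ 1 := by
  have hX' : IsLowerSet (X : Set (Finset (Fin n))) := fun σ τ hτσ hσ => hX.2.1 σ hσ τ hτσ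
  have hQ := isHermitian_Qup hw k
  have hcount : ∀ i ≤ k, #{τ | 1 - ((i : ℝ) + 1) / ((k : ℝ) + 1) < hQ.eigenvalues τ} ≤
      #(X.filter (·.card = i)) := fun i hik =>
    (hQ.sigPos_toQuadraticForm'_sub_smul_one _).symm.trans_le
      (sigPos_Qup_le_card_faces hX' hw hlse hkd hik)
  refine ⟨hQ, hcount, ?_⟩
  have hthreshold : 1 - (((0 : ℕ) : ℝ) + 1) / ((k : ℝ) + 1) = k / (k + 1) := by
    field_simp
    ring
  refine (hthreshold ▸ hcount 0 k.zero_le).trans (card_le_one.2 fun σ hσ τ hτ => ?_)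
  rw [mem_filter, card_eq_zero] at hσ hτ
  rw [hσ.2, hτ.2]

theorem stmt2 (n d : ℕ) (X : Finset (Finset (Fin n))) (w : Finset (Fin n) → ℝ)
    (hX : IsPureComplex n X d) (hw : IsBalanced n X d w) (hlse : IsZeroLSE n X d w)
    (k : ℕ) (hk1 : 1 ≤ k) (hkd : k < d) :
    ∃ hQ : (Qup n X w k).IsHermitian,
      (∀ i : ℕ, i ≤ k →
        (Finset.univ.filter fun τ : Face n X k =>
            1 - ((i : ℝ) + 1) / ((k : ℝ) + 1) < hQ.eigenvalues τ).card
          ≤ (X.filter fun τ => τ.card = i).card) ∧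
      (Finset.univ.filter fun τ : Face n X k =>
          (k : ℝ) / ((k : ℝ) + 1) < hQ.eigenvalues τ).card ≤ 1 :=
  stmt2_general n d X w hX hw hlse k hkd

end
end

section
/- Let p ∈ ℝ[x₁,…,xₙ] be a nonzero homogeneous polynomial of degree at least 2 with nonnegative coefficients that is log-concave at 𝟙. Then p is indecomposable. -/
/-
Write `p = g + h` with `g` in the variables `I` and `h` in the others, and let `γ = ∇p(𝟙)`,
`H = ∇²p(𝟙)`. Then `H` is block diagonal with respect to `I`, and Euler's identity for the
homogeneous polynomials `∂ⱼp` of degree `d - 1` gives the column sums `∑ᵢ Hᵢⱼ = (d - 1) γⱼ`.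
Nonnegativity of the coefficients makes `p(𝟙)` and both `α = ∑_{i ∈ I} γᵢ` and
`β = ∑_{i ∉ I} γᵢ` positive, and the vector `x = β 𝟙_I - α 𝟙_{Iᶜ}`, orthogonal to `γ`, has
`xᵀ (γγᵀ - p(𝟙) H) x = -(d - 1) p(𝟙) αβ(α + β) < 0`, contradicting log-concavity.
-/

open MvPolynomial Matrix Finset
open scoped Classical

noncomputable section

abbrev MP (n : ℕ) := MvPolynomial (Fin n) ℝ

/-- Iterated partial derivative along a list of indices. -/
def derivList {n : ℕ} (l : List (Fin n)) (q : MP n) : MP n :=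
  l.foldr (fun i r => pderiv i r) q

/-- Gradient at the all-ones point. -/
def gradOne {n : ℕ} (q : MP n) : Fin n → ℝ := fun i => eval (fun _ => (1:ℝ)) (pderiv i q)

/-- Hessian at the all-ones point. -/
def hessOne {n : ℕ} (q : MP n) : Matrix (Fin n) (Fin n) ℝ :=
  Matrix.of fun i j => eval (fun _ => (1:ℝ)) (pderiv i (pderiv j q))

/-- `q` is log-concave at the all-ones point: `q(𝟙)·∇²q(𝟙) − ∇q(𝟙)∇q(𝟙)ᵀ` is NSD,
equivalently its negation is PSD. -/
def LogConcaveAtOne {n : ℕ} (q : MP n) : Prop :=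
  (vecMulVec (gradOne q) (gradOne q) - eval (fun _ => (1:ℝ)) q • hessOne q).PosSemidef

/-- `q` is strongly log-concave at the all-ones point. -/
def StronglyLogConcaveAtOne {n : ℕ} (q : MP n) : Prop :=
  ∀ l : List (Fin n), LogConcaveAtOne (derivList l q)

/-- `p` is decomposable: it is the sum of two nonconstant polynomials in disjoint
sets of variables. -/
def Decomposable {n : ℕ} (p : MP n) : Prop :=
  ∃ I : Finset (Fin n), I.Nonempty ∧ I ≠ Finset.univ ∧
    ∃ g h : MP n, 0 < g.totalDegree ∧ 0 < h.totalDegree ∧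
      g.vars ⊆ I ∧ Disjoint h.vars I ∧ p = g + h

namespace MvPolynomial

variable {σ R : Type*}

section CommSemiring

variable [CommSemiring R]

theorem eval_one_eq_sum_coeff (q : MvPolynomial σ R) :
    eval (fun _ => 1) q = ∑ m ∈ q.support, coeff m q := by
  conv_lhs => rw [q.as_sum]
  rw [map_sum]
  refine Finset.sum_congr rfl fun m _ => ?_
  simp [eval_monomial, Finsupp.prod]

theorem eval_one_pderiv_eq_sum (q : MvPolynomial σ R) (i : σ) :
    eval (fun _ => 1) (pderiv i q) = ∑ m ∈ q.support, coeff m q * m i := by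
  conv_lhs => rw [q.as_sum]
  rw [map_sum, map_sum]
  refine Finset.sum_congr rfl fun m _ => ?_
  simp [pderiv_monomial, eval_monomial, Finsupp.prod]

theorem vars_pderiv_subset (q : MvPolynomial σ R) (i : σ) : (pderiv i q).vars ⊆ q.vars := by
  intro k hk
  obtain ⟨m, hm, hmk⟩ := (mem_vars_iff_mem_support k).mp hk
  rw [mem_support_iff, coeff_pderiv] at hm
  refine (mem_vars_iff_mem_support k).mpr
    ⟨m + Finsupp.single i 1, mem_support_iff.mpr (left_ne_zero_of_mul hm), ?_⟩
  rw [Finsupp.mem_support_iff] at hmk ⊢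
  simp [hmk]

theorem pderiv_pderiv_eq_zero_of_notMem_vars {q : MvPolynomial σ R} {i j : σ}
    (h : i ∉ q.vars ∨ j ∉ q.vars) : pderiv i (pderiv j q) = 0 := by
  rcases h with hi | hj
  · exact pderiv_eq_zero_of_notMem_vars fun hi' => hi (vars_pderiv_subset q j hi')
  · rw [pderiv_eq_zero_of_notMem_vars hj, map_zero]

theorem IsHomogeneous.sum_eval_one_pderiv [Fintype σ] {q : MvPolynomial σ R} {n : ℕ}
    (h : q.IsHomogeneous n) :
    ∑ i, eval (fun _ => 1) (pderiv i q) = n * eval (fun _ => 1) q := by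
  simpa using congrArg (eval fun _ => (1 : R)) h.sum_X_mul_pderiv

theorem vars_nonempty_of_totalDegree_pos {q : MvPolynomial σ R} (h : 0 < q.totalDegree) :
    q.vars.Nonempty := by
  rw [Finset.nonempty_iff_ne_empty, Ne, vars_eq_empty_iff_eq_C]
  intro hC
  rw [hC, totalDegree_C] at h
  exact h.false

end CommSemiring

variable {q : MvPolynomial σ ℝ}

theorem eval_one_pos_of_coeff_nonneg (hq : ∀ m, 0 ≤ coeff m q) (hq0 : q ≠ 0) :
    0 < eval (fun _ => 1) q := by
  rw [eval_one_eq_sum_coeff]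
  obtain ⟨m, hm⟩ := support_nonempty.mpr hq0
  exact Finset.sum_pos' (fun m _ => hq m) ⟨m, hm, (hq m).lt_of_ne' (mem_support_iff.mp hm)⟩

theorem eval_one_pderiv_nonneg_of_coeff_nonneg (hq : ∀ m, 0 ≤ coeff m q) (i : σ) :
    0 ≤ eval (fun _ => 1) (pderiv i q) := by
  rw [eval_one_pderiv_eq_sum]
  exact Finset.sum_nonneg fun m _ => mul_nonneg (hq m) (Nat.cast_nonneg _)

theorem eval_one_pderiv_pos_of_coeff_nonneg (hq : ∀ m, 0 ≤ coeff m q) {i : σ}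
    (hi : i ∈ q.vars) :
    0 < eval (fun _ => 1) (pderiv i q) := by
  rw [eval_one_pderiv_eq_sum]
  obtain ⟨m, hm, hmi⟩ := (mem_vars_iff_mem_support i).mp hi
  refine Finset.sum_pos' (fun m _ => mul_nonneg (hq m) (Nat.cast_nonneg _)) ⟨m, hm, ?_⟩
  exact mul_pos ((hq m).lt_of_ne' (mem_support_iff.mp hm))
    (Nat.cast_pos.mpr (Nat.pos_of_ne_zero (Finsupp.mem_support_iff.mp hmi)))

end MvPolynomial

theorem Finset.sum_ite_mem_mul {ι R : Type*} [Fintype ι] [DecidableEq ι]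
    [NonUnitalNonAssocSemiring R] (I : Finset ι) (a b : R) (f : ι → R) :
    ∑ i, (if i ∈ I then a else b) * f i = a * ∑ i ∈ I, f i + b * ∑ i ∈ Iᶜ, f i := by
  rw [← sum_add_sum_compl I, mul_sum, mul_sum]
  congr 1 <;> refine sum_congr rfl fun i hi => ?_ <;> simp_all

theorem Matrix.not_posSemidef_vecMulVec_sub_smul_of_block {ι : Type*} [Fintype ι]
    [DecidableEq ι] (γ : ι → ℝ) (H : Matrix ι ι ℝ) {P c : ℝ} (I : Finset ι)
    (hP : 0 < P) (hc : 0 < c)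
    (hblock : ∀ i j, ¬(i ∈ I ↔ j ∈ I) → H i j = 0) (hcol : ∀ j, ∑ i, H i j = c * γ j)
    (hα : 0 < ∑ i ∈ I, γ i) (hβ : 0 < ∑ i ∈ Iᶜ, γ i) :
    ¬ (vecMulVec γ γ - P • H).PosSemidef := by
  intro hpsd
  set α := ∑ i ∈ I, γ i
  set β := ∑ i ∈ Iᶜ, γ i
  set x : ι → ℝ := fun i => if i ∈ I then β else -α with hx
  have hxγ : x ⬝ᵥ γ = 0 := by
    rw [dotProduct, Finset.sum_ite_mem_mul]; ring
  have hxH : x ᵥ* H = fun j => c * (x j * γ j) := by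
    funext j
    rw [vecMul, dotProduct, mul_left_comm, ← hcol j, mul_sum]
    -- `x i * H i j = x j * H i j`: `x` is constant on the diagonal blocks of `H`
    refine sum_congr rfl fun i _ => ?_
    by_cases hij : i ∈ I ↔ j ∈ I
    · simp only [hx, hij, mul_comm]
    · simp [hblock i j hij]
  have hquad : (x ᵥ* H) ⬝ᵥ x = c * (β ^ 2 * α + α ^ 2 * β) := by
    rw [hxH, dotProduct]
    calc ∑ j, c * (x j * γ j) * x j
      _ = ∑ j, (if j ∈ I then c * β ^ 2 else c * α ^ 2) * γ j := by
        refine sum_congr rfl fun j _ => ?_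
        simp only [hx]; split_ifs <;> ring
      _ = _ := by rw [Finset.sum_ite_mem_mul]; ring
  have hnonneg := hpsd.dotProduct_mulVec_nonneg x
  rw [star_trivial, dotProduct_mulVec, vecMul_sub, vecMul_vecMulVec, vecMul_smul, hxγ,
    zero_smul, zero_sub, neg_dotProduct, smul_dotProduct, hquad, smul_eq_mul] at hnonneg
  have : 0 < P * (c * (β ^ 2 * α + α ^ 2 * β)) := by positivity
  linarith

theorem stmt14 (n d : ℕ) (hd : 2 ≤ d) (p : MP n) (hp0 : p ≠ 0)
    (hhom : p.IsHomogeneous d) (hnn : ∀ m, 0 ≤ coeff m p)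
    (hlc : LogConcaveAtOne p) :
    ¬ Decomposable p := by
  rintro ⟨I, -, -, g, h, hg, hh, hgI, hhI, rfl⟩
  have hvars := vars_add_of_disjoint (Finset.disjoint_of_subset_left hgI hhI.symm)
  have hgrad_sum_pos : ∀ s : Finset (Fin n), ∀ k ∈ s, k ∈ (g + h).vars →
      0 < ∑ i ∈ s, gradOne (g + h) i := fun s k hks hk =>
    sum_pos' (fun i _ => eval_one_pderiv_nonneg_of_coeff_nonneg hnn i)
      ⟨k, hks, eval_one_pderiv_pos_of_coeff_nonneg hnn hk⟩
  obtain ⟨i, hi⟩ := vars_nonempty_of_totalDegree_pos hg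
  obtain ⟨j, hj⟩ := vars_nonempty_of_totalDegree_pos hh
  refine Matrix.not_posSemidef_vecMulVec_sub_smul_of_block (gradOne (g + h)) (hessOne (g + h)) I
    (eval_one_pos_of_coeff_nonneg hnn hp0) (c := ((d - 1 : ℕ) : ℝ))
    (Nat.cast_pos.mpr (by omega))
    ?_ (fun j => (hhom.pderiv (i := j)).sum_eval_one_pderiv)
    (hgrad_sum_pos I i (hgI hi) (hvars ▸ mem_union_left _ hi))
    (hgrad_sum_pos Iᶜ j (mem_compl.mpr (disjoint_left.mp hhI hj))
      (hvars ▸ mem_union_right _ hj))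
    hlc
  intro i j hij
  have hgij : i ∉ g.vars ∨ j ∉ g.vars := by
    by_contra! hc
    exact hij (iff_of_true (hgI hc.1) (hgI hc.2))
  have hhij : i ∉ h.vars ∨ j ∉ h.vars := by
    by_contra! hc
    exact hij (iff_of_false (disjoint_left.mp hhI hc.1) (disjoint_left.mp hhI hc.2))
  simp [hessOne, pderiv_pderiv_eq_zero_of_notMem_vars hgij,
    pderiv_pderiv_eq_zero_of_notMem_vars hhij]

end
end

section
/- Let A ∈ ℝ^{n×n} be a symmetric matrix with at most one positive eigenvalue, and let P ∈ ℝ^{m×n} be an arbitrary matrix. Then the symmetric matrix P·A·Pᵀ has at most one positive eigenvalue. -/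
/-!
The number of positive eigenvalues of a real symmetric matrix `A` is the positive index of
inertia `sigPos` of its quadratic form `x ↦ x ⬝ᵥ A *ᵥ x`, i.e. the largest dimension of a subspace
on which the form is positive definite. The form of `P * A * Pᵀ` is that of `A` composed with
`Pᵀ`, and a linear map is injective on any subspace where the pulled-back form is positive
definite, so such a subspace is carried onto one of the same dimension for `A`.
-/

open Matrix QuadraticMap Finset
open scoped Classical

namespace QuadraticForm

theorem sigPos_comp_le {K V W : Type*} [Field K] [LinearOrder K]
    [AddCommGroup V] [Module K V] [FiniteDimensional K V]
    [AddCommGroup W] [Module K W] [FiniteDimensional K W]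
    (Q : QuadraticForm K V) (f : W →ₗ[K] V) : sigPos (Q.comp f) ≤ sigPos Q := by
  obtain ⟨U, hU, hpos⟩ := exists_finrank_eq_sigPos_and_posDef (Q.comp f)
  have hinj : Function.Injective (f.submoduleMap U) := by
    rw [← LinearMap.ker_eq_bot, LinearMap.ker_eq_bot']
    intro u hu
    by_contra hu0
    have hfu : f u = 0 := congrArg Subtype.val hu
    simpa [hfu] using hpos u hu0
  have hmap : (Q.restrict (U.map f)).PosDef := by
    rintro ⟨_, u, hu, rfl⟩ hfu
    have hu0 : (⟨u, hu⟩ : U) ≠ 0 := by rintro ⟨⟩; simp at hfu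
    exact hpos _ hu0
  calc sigPos (Q.comp f) = Module.finrank K U := hU.symm
    _ ≤ Module.finrank K (U.map f) := LinearMap.finrank_le_finrank_of_injective hinj
    _ ≤ sigPos Q := le_sigPos_of_posDef Q hmap

end QuadraticForm

namespace Matrix

variable {n m : Type*} [Fintype n] [DecidableEq n] [Fintype m] [DecidableEq m]

theorem toQuadraticForm'_apply {R : Type*} [CommRing R] (M : Matrix n n R) (x : n → R) :
    M.toQuadraticForm' x = x ⬝ᵥ M *ᵥ x := by
  simp [toQuadraticForm', toLinearMap₂'_apply']

theorem toQuadraticForm'_mul_mul_transpose {R : Type*} [CommRing R] (P : Matrix m n R)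
    (A : Matrix n n R) : (P * A * Pᵀ).toQuadraticForm' = A.toQuadraticForm'.comp (toLin' Pᵀ) := by
  ext x
  rw [QuadraticMap.comp_apply, toQuadraticForm'_apply, toQuadraticForm'_apply, toLin'_apply,
    ← mulVec_mulVec, ← mulVec_mulVec, dotProduct_mulVec, mulVec_transpose]

theorem toQuadraticForm'_diagonal {R : Type*} [CommRing R] (w : n → R) :
    (diagonal w).toQuadraticForm' = weightedSumSquares R w := by
  ext x
  simp only [toQuadraticForm'_apply, weightedSumSquares_apply, dotProduct, mulVec_diagonal,
    smul_eq_mul]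
  exact sum_congr rfl fun i _ => by ring

theorem sigPos_toQuadraticForm'_diagonal {K : Type*} [Field K] [LinearOrder K]
    [IsStrictOrderedRing K] (w : n → K) :
    sigPos (diagonal w).toQuadraticForm' = #{i | 0 < w i} := by
  rw [toQuadraticForm'_diagonal, QuadraticForm.sigPos_weightedSumSquares,
    ← Set.ncard_coe_finset]
  simp

theorem IsHermitian.sigPos_toQuadraticForm' {A : Matrix n n ℝ} (hA : A.IsHermitian) :
    sigPos A.toQuadraticForm' = #{i | 0 < hA.eigenvalues i} := by
  set U : Matrix n n ℝ := ↑hA.eigenvectorUnitary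
  have hA' : A = U * diagonal hA.eigenvalues * Uᵀ := by
    simpa [star_eq_conjTranspose] using hA.spectral_theorem
  have hD : diagonal hA.eigenvalues = Uᵀ * A * Uᵀᵀ := by
    simpa [star_eq_conjTranspose] using hA.conjStarAlgAut_star_eigenvectorUnitary.symm
  rw [← sigPos_toQuadraticForm'_diagonal]
  apply le_antisymm
  · conv_lhs => rw [hA', toQuadraticForm'_mul_mul_transpose]
    exact QuadraticForm.sigPos_comp_le _ _
  · conv_lhs => rw [hD, toQuadraticForm'_mul_mul_transpose]
    exact QuadraticForm.sigPos_comp_le _ _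

end Matrix

theorem stmt15 (n m : ℕ) (A : Matrix (Fin n) (Fin n) ℝ) (hA : A.IsHermitian)
    (h1 : (Finset.univ.filter fun i => 0 < hA.eigenvalues i).card ≤ 1)
    (P : Matrix (Fin m) (Fin n) ℝ) :
    ∃ hB : (P * A * Pᵀ).IsHermitian,
      (Finset.univ.filter fun i => 0 < hB.eigenvalues i).card ≤ 1 := by
  have hB : (P * A * Pᵀ).IsHermitian := by
    simpa using isHermitian_mul_mul_conjTranspose P hA
  refine ⟨hB, ?_⟩
  rw [← hA.sigPos_toQuadraticForm'] at h1
  rw [← hB.sigPos_toQuadraticForm', toQuadraticForm'_mul_mul_transpose]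
  exact (QuadraticForm.sigPos_comp_le _ _).trans h1
end

section
/- Let A ∈ ℝ^{n×n} be a symmetric matrix with at most one positive eigenvalue, and let B ∈ ℝ^{n×n} be a (symmetric) positive semidefinite matrix. Then every complex eigenvalue of the product B·A is real, and the characteristic polynomial of B·A has at most one root, counted with multiplicity, that is strictly positive. -/
open Matrix Finset
open scoped Classical

/-!
Write `B = Cᴴ C`. Then `B A = Cᴴ (C A)` has the same characteristic polynomial as the Hermitian
matrix `C A Cᴴ`, so all its roots are real eigenvalues of `C A Cᴴ`. The number of positive
eigenvalues of a Hermitian matrix bounds the dimension of every subspace on which its quadratic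
form is positive definite, and is attained by the span of the corresponding eigenvectors. Since
`⟪x, C A Cᴴ x⟫ = ⟪Cᴴ x, A Cᴴ x⟫`, the map `x ↦ Cᴴ x` sends such a subspace for `C A Cᴴ`
injectively to one for `A`, so congruence cannot increase the number of positive eigenvalues.
-/

section Inertia

open Module Submodule
open scoped InnerProductSpace

namespace Matrix

variable {𝕜 : Type*} [RCLike 𝕜] {m n : Type*} [Fintype m] [Fintype n] [DecidableEq m]
  [DecidableEq n]

lemma inner_toEuclideanLin_mul_mul_conjTranspose (A : Matrix n n 𝕜) (C : Matrix m n 𝕜)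
    (x : EuclideanSpace 𝕜 m) :
    ⟪x, toEuclideanLin (C * A * Cᴴ) x⟫_𝕜 =
      ⟪toEuclideanLin Cᴴ x, toEuclideanLin A (toEuclideanLin Cᴴ x)⟫_𝕜 := by
  simp only [toLpLin_mul_same, LinearMap.comp_apply]
  rw [toEuclideanLin_conjTranspose_eq_adjoint, LinearMap.adjoint_inner_left]

open scoped MatrixOrder ComplexOrder in
lemma PosSemidef.exists_eq_conjTranspose_mul_self {B : Matrix n n 𝕜} (hB : B.PosSemidef) :
    ∃ C : Matrix n n 𝕜, B = Cᴴ * C :=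
  CStarAlgebra.nonneg_iff_eq_star_mul_self.mp hB.nonneg

namespace IsHermitian

variable {A : Matrix n n 𝕜}

/-- The positive index of inertia. -/
noncomputable def posIndex (hA : A.IsHermitian) : ℕ := #{i | 0 < hA.eigenvalues i}

noncomputable def eigenvectorSpan (hA : A.IsHermitian) (p : ℝ → Prop) :
    Submodule 𝕜 (EuclideanSpace 𝕜 n) :=
  span 𝕜 (hA.eigenvectorBasis '' ↑({i | p (hA.eigenvalues i)} : Finset n))

lemma finrank_eigenvectorSpan (hA : A.IsHermitian) (p : ℝ → Prop) :
    finrank 𝕜 (hA.eigenvectorSpan p) = #{i | p (hA.eigenvalues i)} := by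
  rw [eigenvectorSpan, Set.image_eq_range, finrank_span_eq_card]
  · simp
  · exact hA.eigenvectorBasis.orthonormal.linearIndependent.comp _ Subtype.val_injective

lemma exists_eq_sum_of_mem_eigenvectorSpan (hA : A.IsHermitian) {p : ℝ → Prop}
    {x : EuclideanSpace 𝕜 n} (hx : x ∈ hA.eigenvectorSpan p) :
    ∃ c : n → 𝕜, x = ∑ i ∈ {i | p (hA.eigenvalues i)}, c i • hA.eigenvectorBasis i := by
  obtain ⟨c, rfl⟩ := (mem_span_image_finset_iff_exists_fun' 𝕜).mp hx
  exact ⟨c, rfl⟩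

lemma toEuclideanLin_eigenvectorBasis (hA : A.IsHermitian) (i : n) :
    toEuclideanLin A (hA.eigenvectorBasis i) = (hA.eigenvalues i : 𝕜) • hA.eigenvectorBasis i := by
  rw [toLpLin_apply, hA.mulVec_eigenvectorBasis i, RCLike.real_smul_eq_coe_smul (K := 𝕜)]
  rfl

lemma inner_toEuclideanLin_sum_smul_eigenvectorBasis (hA : A.IsHermitian) (s : Finset n)
    (c : n → 𝕜) :
    ⟪∑ i ∈ s, c i • hA.eigenvectorBasis i,
      toEuclideanLin A (∑ i ∈ s, c i • hA.eigenvectorBasis i)⟫_𝕜 =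
      ((∑ i ∈ s, hA.eigenvalues i * ‖c i‖ ^ 2 : ℝ) : 𝕜) := by
  simp only [map_sum, map_smul, hA.toEuclideanLin_eigenvectorBasis, smul_smul]
  rw [hA.eigenvectorBasis.orthonormal.inner_sum]
  push_cast
  refine Finset.sum_congr rfl fun i _ => ?_
  rw [← RCLike.conj_mul]
  ring

lemma re_inner_toEuclideanLin_nonpos (hA : A.IsHermitian) {x : EuclideanSpace 𝕜 n}
    (hx : x ∈ hA.eigenvectorSpan (· ≤ 0)) : RCLike.re ⟪x, toEuclideanLin A x⟫_𝕜 ≤ 0 := by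
  obtain ⟨c, rfl⟩ := hA.exists_eq_sum_of_mem_eigenvectorSpan hx
  rw [inner_toEuclideanLin_sum_smul_eigenvectorBasis, RCLike.ofReal_re]
  exact Finset.sum_nonpos fun i hi =>
    mul_nonpos_of_nonpos_of_nonneg (Finset.mem_filter.mp hi).2 (by positivity)

lemma re_inner_toEuclideanLin_pos (hA : A.IsHermitian) {x : EuclideanSpace 𝕜 n}
    (hx : x ∈ hA.eigenvectorSpan (0 < ·)) (hx0 : x ≠ 0) :
    0 < RCLike.re ⟪x, toEuclideanLin A x⟫_𝕜 := by
  obtain ⟨c, rfl⟩ := hA.exists_eq_sum_of_mem_eigenvectorSpan hx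
  obtain ⟨j, hj, hcj⟩ := Finset.exists_ne_zero_of_sum_ne_zero hx0
  rw [inner_toEuclideanLin_sum_smul_eigenvectorBasis, RCLike.ofReal_re]
  refine Finset.sum_pos' (fun i hi => ?_) ⟨j, hj, ?_⟩
  · exact mul_nonneg (Finset.mem_filter.mp hi).2.le (by positivity)
  · have hcj' : c j ≠ 0 := left_ne_zero_of_smul hcj
    exact mul_pos (Finset.mem_filter.mp hj).2 (by positivity)

lemma finrank_le_posIndex (hA : A.IsHermitian) (V : Submodule 𝕜 (EuclideanSpace 𝕜 n))
    (hV : ∀ x ∈ V, x ≠ 0 → 0 < RCLike.re ⟪x, toEuclideanLin A x⟫_𝕜) :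
    finrank 𝕜 V ≤ hA.posIndex := by
  have hdisj : Disjoint V (hA.eigenvectorSpan (· ≤ 0)) :=
    disjoint_def.mpr fun x hxV hxW => by
      by_contra hx0
      exact (hV x hxV hx0).not_ge (hA.re_inner_toEuclideanLin_nonpos hxW)
  have hdim := Submodule.finrank_add_finrank_le_of_disjoint hdisj
  rw [finrank_eigenvectorSpan, finrank_euclideanSpace] at hdim
  have hsplit := Finset.card_filter_add_card_filter_not (s := univ)
    (fun i => 0 < hA.eigenvalues i)
  simp only [not_lt, card_univ] at hsplit
  unfold posIndex
  omega

theorem posIndex_mul_mul_conjTranspose_le (hA : A.IsHermitian) (C : Matrix m n 𝕜) :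
    (isHermitian_mul_mul_conjTranspose C hA).posIndex ≤ hA.posIndex := by
  set hM := isHermitian_mul_mul_conjTranspose C hA
  set U := hM.eigenvectorSpan (0 < ·)
  set L := toEuclideanLin Cᴴ ∘ₗ U.subtype
  have hpos (u : U) (hu : u ≠ 0) : 0 < RCLike.re ⟪L u, toEuclideanLin A (L u)⟫_𝕜 := by
    rw [LinearMap.comp_apply, Submodule.subtype_apply,
      ← inner_toEuclideanLin_mul_mul_conjTranspose]
    exact hM.re_inner_toEuclideanLin_pos u.2 (by simpa using hu)
  have hinj : Function.Injective L := by
    rw [← LinearMap.ker_eq_bot, LinearMap.ker_eq_bot']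
    intro u hu
    by_contra hu0
    simpa [hu] using hpos u hu0
  calc hM.posIndex = finrank 𝕜 U := (hM.finrank_eigenvectorSpan _).symm
    _ = finrank 𝕜 (LinearMap.range L) := (L.finrank_range_of_inj hinj).symm
    _ ≤ hA.posIndex := hA.finrank_le_posIndex _ <| by
      rintro _ ⟨u, rfl⟩ hu
      exact hpos u (by rintro rfl; simp at hu)

end IsHermitian

end Matrix

end Inertia

theorem stmt16 (n : ℕ) (A B : Matrix (Fin n) (Fin n) ℝ) (hA : A.IsHermitian)
    (h1 : (Finset.univ.filter fun i => 0 < hA.eigenvalues i).card ≤ 1)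
    (hB : B.PosSemidef) :
    (∀ z : ℂ, ((B * A).charpoly.map (algebraMap ℝ ℂ)).IsRoot z → z.im = 0) ∧
      (Multiset.card ((B * A).charpoly.roots.filter (fun x => 0 < x)) ≤ 1) := by
  obtain ⟨C, rfl⟩ := hB.exists_eq_conjTranspose_mul_self
  have hM := isHermitian_mul_mul_conjTranspose C hA
  have hchar : (Cᴴ * C * A).charpoly = (C * A * Cᴴ).charpoly := by
    rw [Matrix.mul_assoc, charpoly_mul_comm]
  rw [hchar]
  refine ⟨fun z hz => ?_, ?_⟩
  · obtain ⟨r, rfl⟩ := hM.splits_charpoly.mem_range_of_isRoot (charpoly_monic _).ne_zero hz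
    exact Complex.ofReal_im r
  · rw [hM.roots_charpoly_eq_eigenvalues, Multiset.filter_map, Multiset.card_map]
    exact (hA.posIndex_mul_mul_conjTranspose_le C).trans h1
end

section
/- Let A ∈ ℝ^{n×n} be a symmetric matrix with nonnegative entries and at most one positive eigenvalue, set w(i) = Σ_{j=1}^n A_{ij}, and assume w(i) > 0 for every i. Then A ≼ (w·wᵀ)/(Σ_{i=1}^n w(i)), i.e. the symmetric matrix (w·wᵀ)/(Σ_i w(i)) − A is positive semidefinite. -/
/-!
A quadratic form with at most one positive eigenvalue satisfies the reverse Cauchy–Schwarz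
(Aczél) inequality `q(x,x) q(y,y) ≤ q(x,y)²` whenever `q(y,y) > 0`: if `c`, `d` are the
eigencoordinates of `x`, `y` and `k₀` is the positive direction, then `c k₀ • d - d k₀ • c` has no
`k₀`-component, so `q` is nonpositive on it; expanding gives a nonpositive quadratic polynomial,
whose discriminant must be nonnegative.
Taking `q(x,y) = xᵀ A y` and `y = 1`, so that `A 1 = w` and `q(1,1) = ∑ w i`, this is exactly
`(xᵀ A x) (∑ w i) ≤ (w ⬝ x)²`.
-/

open Matrix Finset
open scoped Classical

theorem weighted_aczel_inequality {ι : Type*} [Fintype ι] {μ : ι → ℝ} {k₀ : ι}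
    (hμ : ∀ k ≠ k₀, μ k ≤ 0) (c d : ι → ℝ) (hd : 0 < ∑ k, μ k * (d k * d k)) :
    (∑ k, μ k * (c k * c k)) * (∑ k, μ k * (d k * d k)) ≤ (∑ k, μ k * (c k * d k)) ^ 2 := by
  set D := ∑ k, μ k * (d k * d k)
  set P := ∑ k, μ k * (c k * d k)
  set Q := ∑ k, μ k * (c k * c k)
  have hnonpos (v : ι → ℝ) (hv : v k₀ = 0) : ∑ k, μ k * (v k * v k) ≤ 0 := by
    refine Finset.sum_nonpos fun k _ => ?_
    obtain rfl | hk := eq_or_ne k k₀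
    · simp [hv]
    · exact mul_nonpos_of_nonpos_of_nonneg (hμ k hk) (mul_self_nonneg _)
  have hd₀ : d k₀ ≠ 0 := fun h => (hnonpos d h).not_gt hd
  have hcomb : (c k₀) ^ 2 * D - 2 * (c k₀ * d k₀) * P + (d k₀) ^ 2 * Q ≤ 0 := by
    have := hnonpos (fun k => c k₀ * d k - d k₀ * c k) (by ring)
    convert this using 1
    simp only [D, P, Q, Finset.mul_sum, ← Finset.sum_sub_distrib, ← Finset.sum_add_distrib]
    exact Finset.sum_congr rfl fun k _ => by ring
  have hd₀sq : 0 < (d k₀) ^ 2 := by positivity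
  nlinarith [sq_nonneg (c k₀ * D - d k₀ * P)]

theorem Matrix.IsHermitian.dotProduct_mulVec_eq_sum_eigenvalues {ι : Type*} [Fintype ι]
    [DecidableEq ι] {A : Matrix ι ι ℝ} (hA : A.IsHermitian) (x y : ι → ℝ) :
    x ⬝ᵥ A *ᵥ y = ∑ k, hA.eigenvalues k *
      ((x ᵥ* (hA.eigenvectorUnitary : Matrix ι ι ℝ)) k *
        (y ᵥ* (hA.eigenvectorUnitary : Matrix ι ι ℝ)) k) := by
  set U : Matrix ι ι ℝ := (hA.eigenvectorUnitary : Matrix ι ι ℝ)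
  have hspec : A = U * diagonal hA.eigenvalues * star U := by simpa using hA.spectral_theorem
  have hstar (z : ι → ℝ) : star U *ᵥ z = z ᵥ* U := by
    rw [star_eq_conjTranspose, conjTranspose_eq_transpose_of_trivial, mulVec_transpose]
  conv_lhs => rw [hspec]
  rw [← mulVec_mulVec, ← mulVec_mulVec, dotProduct_mulVec, hstar]
  simp only [dotProduct, mulVec_diagonal]
  exact Finset.sum_congr rfl fun k _ => by ring

theorem Matrix.IsHermitian.dotProduct_mulVec_mul_le_sq_s17 {ι : Type*} [Fintype ι] [DecidableEq ι]
    {A : Matrix ι ι ℝ} (hA : A.IsHermitian)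
    (hpos : (Finset.univ.filter fun i => 0 < hA.eigenvalues i).card ≤ 1)
    {y : ι → ℝ} (hy : 0 < y ⬝ᵥ A *ᵥ y) (x : ι → ℝ) :
    (x ⬝ᵥ A *ᵥ x) * (y ⬝ᵥ A *ᵥ y) ≤ (x ⬝ᵥ A *ᵥ y) ^ 2 := by
  simp only [hA.dotProduct_mulVec_eq_sum_eigenvalues] at hy ⊢
  obtain ⟨k₀, hk₀⟩ : ∃ k₀, 0 < hA.eigenvalues k₀ := by
    by_contra! h
    exact hy.not_ge <| Finset.sum_nonpos fun k _ =>
      mul_nonpos_of_nonpos_of_nonneg (h k) (mul_self_nonneg _)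
  refine weighted_aczel_inequality (k₀ := k₀) (fun k hk => ?_) _ _ hy
  by_contra! h
  exact hk (Finset.card_le_one.mp hpos k (by simp [h]) k₀ (by simp [hk₀]))

theorem Matrix.IsHermitian.posSemidef_inv_smul_vecMulVec_sub {ι : Type*} [Fintype ι]
    [DecidableEq ι] {A : Matrix ι ι ℝ} (hA : A.IsHermitian)
    (hpos : (Finset.univ.filter fun i => 0 < hA.eigenvalues i).card ≤ 1)
    {v : ι → ℝ} (hv : 0 < v ⬝ᵥ A *ᵥ v) :
    ((v ⬝ᵥ A *ᵥ v)⁻¹ • vecMulVec (A *ᵥ v) (A *ᵥ v) - A).PosSemidef := by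
  set s := v ⬝ᵥ A *ᵥ v
  have hherm : (vecMulVec (A *ᵥ v) (A *ᵥ v)).IsHermitian := by
    simpa using (posSemidef_vecMulVec_self_star (A *ᵥ v)).isHermitian
  refine posSemidef_iff_dotProduct_mulVec.mpr
    ⟨(hherm.smul (IsSelfAdjoint.all _)).sub hA, fun x => ?_⟩
  have hform : x ⬝ᵥ (s⁻¹ • vecMulVec (A *ᵥ v) (A *ᵥ v) - A) *ᵥ x
      = s⁻¹ * (x ⬝ᵥ A *ᵥ v) ^ 2 - x ⬝ᵥ A *ᵥ x := by
    rw [sub_mulVec, dotProduct_sub, smul_mulVec, dotProduct_smul, vecMulVec_mulVec,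
      op_smul_eq_smul, dotProduct_smul, dotProduct_comm (A *ᵥ v) x, smul_eq_mul, smul_eq_mul, sq]
  rw [star_trivial, hform, sub_nonneg, le_inv_mul_iff₀ hv, mul_comm]
  exact hA.dotProduct_mulVec_mul_le_sq_s17 hpos hv x

theorem stmt17_general (n : ℕ) (A : Matrix (Fin n) (Fin n) ℝ) (hA : A.IsHermitian)
    (h1 : (Finset.univ.filter fun i => 0 < hA.eigenvalues i).card ≤ 1)
    (w : Fin n → ℝ) (hw : ∀ i, w i = ∑ j, A i j) (hwpos : ∀ i, 0 < w i) :
    ((∑ i, w i)⁻¹ • vecMulVec w w - A).PosSemidef := by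
  rcases isEmpty_or_nonempty (Fin n) with _ | _
  · convert PosSemidef.zero
    exact Subsingleton.elim _ _
  have hA1 : A *ᵥ 1 = w := funext fun i => by simp [mulVec, dotProduct, hw]
  have hsum : (1 : Fin n → ℝ) ⬝ᵥ A *ᵥ 1 = ∑ i, w i := by simp [hA1, one_dotProduct]
  have hs : 0 < ∑ i, w i := Finset.sum_pos (fun i _ => hwpos i) Finset.univ_nonempty
  have := hA.posSemidef_inv_smul_vecMulVec_sub h1 (hsum ▸ hs)
  rwa [hsum, hA1] at this

theorem stmt17 (n : ℕ) (A : Matrix (Fin n) (Fin n) ℝ) (hA : A.IsHermitian)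
    (hnn : ∀ i j, 0 ≤ A i j)
    (h1 : (Finset.univ.filter fun i => 0 < hA.eigenvalues i).card ≤ 1)
    (w : Fin n → ℝ) (hw : ∀ i, w i = ∑ j, A i j) (hwpos : ∀ i, 0 < w i) :
    ((∑ i, w i)⁻¹ • vecMulVec w w - A).PosSemidef :=
  stmt17_general n A hA h1 w hw hwpos
end

section
/- Let p ∈ ℝ[x₁,…,xₙ] be a d-homogeneous polynomial with nonnegative coefficients. Then p is log-concave on the positive orthant — i.e. for all x, y ∈ ℝⁿ with all coordinates strictly positive and all t ∈ [0,1], p(t·x + (1−t)·y) ≥ p(x)^t·p(y)^{1−t} — if and only if for every x ∈ ℝⁿ with all coordinates strictly positive, the Hessian matrix (∇²p)(x) = ((∂ᵢ∂ⱼp)(x))ᵢⱼ has at most one positive eigenvalue. -/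
open MvPolynomial Matrix Finset
open scoped Classical

/-!
Restricted to a line `s ↦ x + s • v`, `log p` is concave iff `p · ∂ᵥ²p ≤ (∂ᵥp)²` along it, so
log-concavity on the positive orthant is the pointwise condition `p(x) · vᵀHv ≤ (∇p(x) · v)²` for
all `v`, where `H = (∇²p)(x)`. This makes `H` negative semidefinite on the hyperplane `∇p(x)ᗮ`,
which leaves room for at most one positive eigenvalue. Conversely, at most one positive eigenvalue
gives the reverse Cauchy–Schwarz inequality `(uᵀHu)(vᵀHv) ≤ (uᵀHv)²` whenever `uᵀHu > 0`. By
Euler's identities `Hx = (d - 1)∇p(x)` and `x · ∇p(x) = d p(x)`, the choice `u = x` turns it into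
`d p(x) · vᵀHv ≤ (d - 1)(∇p(x) · v)²` when `d ≥ 2`; for `d ≤ 1` the Hessian vanishes.
-/

section Concavity

variable {E : Type*} [AddCommGroup E] [Module ℝ E]

theorem AffineMap.coe_lineMap_add (z v : E) :
    ⇑(AffineMap.lineMap z (z + v) : ℝ →ᵃ[ℝ] E) = fun s => z + s • v :=
  funext fun s => by rw [AffineMap.lineMap_apply_module', add_sub_cancel_left, add_comm]

theorem Convex.preimage_add_smul {S : Set E} (hS : Convex ℝ S) (z v : E) :
    Convex ℝ ((fun s : ℝ => z + s • v) ⁻¹' S) := by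
  simpa only [AffineMap.coe_lineMap_add] using hS.affine_preimage (AffineMap.lineMap z (z + v))

theorem concaveOn_iff_forall_line {S : Set E} (hS : Convex ℝ S) {g : E → ℝ} :
    ConcaveOn ℝ S g ↔ ∀ z ∈ S, ∀ v : E,
      ConcaveOn ℝ ((fun s : ℝ => z + s • v) ⁻¹' S) (fun s => g (z + s • v)) := by
  constructor
  · intro hg z _ v
    simpa only [AffineMap.coe_lineMap_add, Function.comp_def] using
      hg.comp_affineMap (AffineMap.lineMap z (z + v))
  · intro h
    refine ⟨hS, fun x hx y hy a b ha hb hab => ?_⟩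
    have := (h y hy (x - y)).2 (x := 1) (y := 0) (by simpa using hx) (by simpa using hy) ha hb hab
    obtain rfl : b = 1 - a := by linarith
    simp only [smul_eq_mul, mul_one, mul_zero, add_zero, zero_smul, one_smul,
      add_sub_cancel] at this
    rwa [show a • x + (1 - a) • y = y + a • (x - y) by module]

theorem concaveOn_log_iff_rpow_mul_rpow_le {S : Set E} (hS : Convex ℝ S) {f : E → ℝ}
    (hf : ∀ x ∈ S, 0 < f x) :
    ConcaveOn ℝ S (fun x => Real.log (f x)) ↔
      ∀ x y, x ∈ S → y ∈ S → ∀ t : ℝ, 0 ≤ t → t ≤ 1 →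
        f x ^ t * f y ^ (1 - t) ≤ f (t • x + (1 - t) • y) := by
  have key : ∀ x ∈ S, ∀ y ∈ S, ∀ t : ℝ, 0 ≤ t → t ≤ 1 →
      (t * Real.log (f x) + (1 - t) * Real.log (f y) ≤ Real.log (f (t • x + (1 - t) • y)) ↔
        f x ^ t * f y ^ (1 - t) ≤ f (t • x + (1 - t) • y)) := by
    intro x hx y hy t ht0 ht1
    rw [← Real.exp_le_exp, Real.exp_log (hf _ (hS hx hy ht0 (by linarith) (by ring))),
      Real.exp_add, Real.rpow_def_of_pos (hf x hx), Real.rpow_def_of_pos (hf y hy), mul_comm t,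
      mul_comm (1 - t)]
  constructor
  · intro hc x y hx hy t ht0 ht1
    exact (key x hx y hy t ht0 ht1).1 (hc.2 hx hy ht0 (by linarith) (by ring))
  · intro h
    refine ⟨hS, fun x hx y hy a b ha hb hab => ?_⟩
    obtain rfl : b = 1 - a := by linarith
    exact (key x hx y hy a ha (by linarith)).2 (h x y hx hy a ha (by linarith))

theorem concaveOn_log_iff_mul_le_sq {D : Set ℝ} (hDo : IsOpen D) (hDc : Convex ℝ D)
    {f f' f'' : ℝ → ℝ} (hf : ∀ s ∈ D, 0 < f s) (hf' : ∀ s ∈ D, HasDerivAt f (f' s) s)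
    (hf'' : ∀ s ∈ D, HasDerivAt f' (f'' s) s) :
    ConcaveOn ℝ D (fun s => Real.log (f s)) ↔ ∀ s ∈ D, f s * f'' s ≤ f' s ^ 2 := by
  have hlog : ∀ s ∈ D, HasDerivAt (fun s => Real.log (f s)) (f' s / f s) s :=
    fun s hs => (hf' s hs).log (hf s hs).ne'
  have hlog' : ∀ s ∈ D,
      HasDerivAt (fun s => f' s / f s) ((f'' s * f s - f' s * f' s) / f s ^ 2) s :=
    fun s hs => (hf'' s hs).div (hf' s hs) (hf s hs).ne'
  have hsign : ∀ s ∈ D, (f'' s * f s - f' s * f' s) / f s ^ 2 ≤ 0 ↔ f s * f'' s ≤ f' s ^ 2 :=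
    fun s hs => by rw [div_le_iff₀ (pow_pos (hf s hs) 2), zero_mul, sub_nonpos, mul_comm, sq]
  constructor
  · intro hc s hs
    have hanti : AntitoneOn (fun s => f' s / f s) D :=
      (hc.antitoneOn_deriv fun s hs => (hlog s hs).differentiableAt).congr
        fun s hs => (hlog s hs).deriv
    have hacc : AccPt s (Filter.principal (D ∩ Set.univ)) :=
      (PerfectSpace.univ_preperfect s (Set.mem_univ s)).nhds_inter (hDo.mem_nhds hs)
    rw [← hsign s hs]
    exact (hlog' s hs).hasDerivWithinAt.nonpos_of_antitoneOn hacc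
      (hanti.mono Set.inter_subset_left)
  · intro h
    refine concaveOn_of_hasDerivWithinAt2_nonpos hDc (f' := fun s => f' s / f s)
      (f'' := fun s => (f'' s * f s - f' s * f' s) / f s ^ 2)
      (fun s hs => (hlog s hs).continuousAt.continuousWithinAt) ?_ ?_ ?_ <;> rw [hDo.interior_eq]
    · exact fun s hs => (hlog s hs).hasDerivWithinAt
    · exact fun s hs => (hlog' s hs).hasDerivWithinAt
    · exact fun s hs => (hsign s hs).2 (h s hs)

end Concavity

namespace Matrix.IsHermitian

variable {n : Type*} [Fintype n] [DecidableEq n] {A : Matrix n n ℝ}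

theorem dotProduct_eigenvectorBasis (hA : A.IsHermitian) (k l : n) :
    ⇑(hA.eigenvectorBasis k) ⬝ᵥ ⇑(hA.eigenvectorBasis l) = if k = l then 1 else 0 := by
  rw [← orthonormal_iff_ite.1 hA.eigenvectorBasis.orthonormal k l]
  simp [PiLp.inner_apply, dotProduct, mul_comm]

theorem dotProduct_mulVec_eq_sum_s18 (hA : A.IsHermitian) (u v : n → ℝ) :
    u ⬝ᵥ A *ᵥ v = ∑ k, hA.eigenvalues k * (⇑(hA.eigenvectorBasis k) ⬝ᵥ u) *
      (⇑(hA.eigenvectorBasis k) ⬝ᵥ v) := by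
  have hv : ∑ k, (⇑(hA.eigenvectorBasis k) ⬝ᵥ v) • ⇑(hA.eigenvectorBasis k) = v := by
    simpa [PiLp.inner_apply, dotProduct, mul_comm] using
      congrArg WithLp.ofLp (hA.eigenvectorBasis.sum_repr' (WithLp.toLp 2 v))
  conv_lhs => rw [← hv]
  simp only [mulVec_sum, mulVec_smul, hA.mulVec_eigenvectorBasis, dotProduct_sum,
    dotProduct_smul, smul_eq_mul]
  exact Finset.sum_congr rfl fun k _ => by rw [dotProduct_comm u]; ring

theorem dotProduct_mulVec_comm_s18 (hA : A.IsHermitian) (u v : n → ℝ) :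
    u ⬝ᵥ A *ᵥ v = v ⬝ᵥ A *ᵥ u := by
  simp only [hA.dotProduct_mulVec_eq_sum_s18]
  exact Finset.sum_congr rfl fun k _ => by ring

theorem card_pos_eigenvalues_le_one_iff (hA : A.IsHermitian) :
    (Finset.univ.filter fun i => 0 < hA.eigenvalues i).card ≤ 1 ↔
      ∃ c : n → ℝ, ∀ w, c ⬝ᵥ w = 0 → w ⬝ᵥ A *ᵥ w ≤ 0 := by
  set P := Finset.univ.filter fun i => 0 < hA.eigenvalues i
  constructor
  · intro hP
    refine ⟨∑ k ∈ P, ⇑(hA.eigenvectorBasis k), fun w hw => ?_⟩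
    rw [hA.dotProduct_mulVec_eq_sum_s18]
    refine Finset.sum_nonpos fun k _ => ?_
    by_cases hk : k ∈ P
    · have : ⇑(hA.eigenvectorBasis k) ⬝ᵥ w = 0 := by
        rwa [sum_dotProduct, Finset.sum_eq_single_of_mem k hk
          fun j hj hjk => absurd (Finset.card_le_one.1 hP j hj k hk) hjk] at hw
      simp [this]
    · have hμ : hA.eigenvalues k ≤ 0 := by simpa [P] using hk
      rw [mul_assoc]
      exact mul_nonpos_of_nonpos_of_nonneg hμ (mul_self_nonneg _)
  · rintro ⟨c, hc⟩
    by_contra! hP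
    obtain ⟨a, ha, b, hb, hab⟩ := Finset.one_lt_card.1 hP
    have hμa : 0 < hA.eigenvalues a := (Finset.mem_filter.1 ha).2
    have hμb : 0 < hA.eigenvalues b := (Finset.mem_filter.1 hb).2
    have hform : ∀ x y : ℝ,
        (x • ⇑(hA.eigenvectorBasis a) + y • ⇑(hA.eigenvectorBasis b)) ⬝ᵥ
          A *ᵥ (x • ⇑(hA.eigenvectorBasis a) + y • ⇑(hA.eigenvectorBasis b)) =
        hA.eigenvalues a * x ^ 2 + hA.eigenvalues b * y ^ 2 := by
      intro x y
      simp only [mulVec_add, mulVec_smul, hA.mulVec_eigenvectorBasis, add_dotProduct,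
        smul_dotProduct, dotProduct_add, dotProduct_smul, smul_eq_mul,
        hA.dotProduct_eigenvectorBasis, hab, hab.symm, if_true, if_false]
      ring
    set α := c ⬝ᵥ ⇑(hA.eigenvectorBasis a)
    set β := c ⬝ᵥ ⇑(hA.eigenvectorBasis b)
    have hc' : ∀ x y : ℝ, x * α + y * β = 0 →
        hA.eigenvalues a * x ^ 2 + hA.eigenvalues b * y ^ 2 ≤ 0 :=
      fun x y hxy => hform x y ▸ hc _ (by simpa [dotProduct_add, dotProduct_smul] using hxy)
    by_cases hα : α = 0
    · nlinarith [hc' 1 0 (by simp [hα])]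
    · nlinarith [hc' β (-α) (by ring), mul_nonneg hμa.le (sq_nonneg β),
        mul_pos hμb (pow_two_pos_of_ne_zero hα)]

theorem mul_le_sq_of_card_pos_eigenvalues_le_one (hA : A.IsHermitian)
    (hP : (Finset.univ.filter fun i => 0 < hA.eigenvalues i).card ≤ 1) {u : n → ℝ}
    (hu : 0 < u ⬝ᵥ A *ᵥ u) (v : n → ℝ) :
    (u ⬝ᵥ A *ᵥ u) * (v ⬝ᵥ A *ᵥ v) ≤ (u ⬝ᵥ A *ᵥ v) ^ 2 := by
  obtain ⟨c, hc⟩ := hA.card_pos_eigenvalues_le_one_iff.1 hP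
  have hcu : c ⬝ᵥ u ≠ 0 := fun h => (hc u h).not_gt hu
  set a := u ⬝ᵥ A *ᵥ u
  set b := u ⬝ᵥ A *ᵥ v
  have hvu : v ⬝ᵥ A *ᵥ u = b := hA.dotProduct_mulVec_comm_s18 v u
  set w := a • v - b • u
  have huw : u ⬝ᵥ A *ᵥ w = 0 := by
    simp only [w, mulVec_sub, mulVec_smul, dotProduct_sub, dotProduct_smul, smul_eq_mul]; ring
  have hwu : w ⬝ᵥ A *ᵥ u = 0 := by rw [hA.dotProduct_mulVec_comm_s18, huw]
  have hww : w ⬝ᵥ A *ᵥ w = a * (a * (v ⬝ᵥ A *ᵥ v) - b ^ 2) := by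
    simp only [w, mulVec_sub, mulVec_smul, dotProduct_sub, sub_dotProduct, dotProduct_smul,
      smul_dotProduct, smul_eq_mul, hvu]; ring
  -- `w ⟂ u` for the form, so on the combination of `u` and `w` killed by `c` the form is
  -- `(c ⬝ᵥ w)² a + (c ⬝ᵥ u)² (w ⬝ᵥ A *ᵥ w)`, which must be `≤ 0`.
  have hx := hc ((c ⬝ᵥ w) • u - (c ⬝ᵥ u) • w) (by
    simp only [dotProduct_sub, dotProduct_smul, smul_eq_mul]; ring)
  simp only [mulVec_sub, mulVec_smul, dotProduct_sub, sub_dotProduct, dotProduct_smul,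
    smul_dotProduct, smul_eq_mul, huw, hwu, hww, show u ⬝ᵥ A *ᵥ u = a from rfl] at hx
  by_contra! h
  nlinarith [mul_pos (mul_pos (pow_two_pos_of_ne_zero hcu) hu) (sub_pos.2 h),
    mul_nonneg (sq_nonneg (c ⬝ᵥ w)) hu.le]

end Matrix.IsHermitian

namespace MvPolynomial

variable {σ R : Type*}

noncomputable def gradient [CommSemiring R] (p : MvPolynomial σ R) (x : σ → R) : σ → R :=
  fun i => eval x (pderiv i p)

noncomputable def hessian [CommSemiring R] (p : MvPolynomial σ R) (x : σ → R) : Matrix σ σ R :=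
  Matrix.of fun i j => eval x (pderiv i (pderiv j p))

theorem pderiv_pderiv_comm [CommRing R] (i j : σ) (p : MvPolynomial σ R) :
    pderiv i (pderiv j p) = pderiv j (pderiv i p) := by
  have : ⁅pderiv i, pderiv j⁆ = (0 : Derivation R (MvPolynomial σ R) (MvPolynomial σ R)) :=
    derivation_ext fun k => by
      rw [Derivation.commutator_apply]
      simp [pderiv_X, Pi.single_apply, apply_ite]
  have h := congr($this p)
  rw [Derivation.commutator_apply] at h
  simpa [sub_eq_zero] using h

theorem isHermitian_hessian (p : MvPolynomial σ ℝ) (x : σ → ℝ) : (hessian p x).IsHermitian := by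
  ext i j
  simp [hessian, pderiv_pderiv_comm i j]

theorem IsHomogeneous.hessian_eq_zero [CommSemiring R] {p : MvPolynomial σ R} {d : ℕ}
    (hp : p.IsHomogeneous d) (hd : d ≤ 1) (x : σ → R) : hessian p x = 0 := by
  ext i j
  have h0 : (pderiv j p).IsHomogeneous 0 := Nat.sub_eq_zero_of_le hd ▸ hp.pderiv
  rw [← totalDegree_zero_iff_isHomogeneous, totalDegree_eq_zero_iff_eq_C] at h0
  rw [hessian, of_apply, h0, pderiv_C, map_zero, Matrix.zero_apply]

theorem eval_pos_of_ne_zero {p : MvPolynomial σ ℝ} (hnn : ∀ m, 0 ≤ coeff m p) (hp : p ≠ 0)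
    {x : σ → ℝ} (hx : ∀ i, 0 < x i) : 0 < eval x p := by
  obtain ⟨m, hm⟩ := Finset.nonempty_iff_ne_empty.2 (mt support_eq_empty.1 hp)
  rw [eval_eq]
  exact Finset.sum_pos'
    (fun m _ => mul_nonneg (hnn m) (prod_nonneg fun i _ => pow_nonneg (hx i).le _))
    ⟨m, hm, mul_pos ((hnn m).lt_of_ne' (mem_support_iff.1 hm))
      (prod_pos fun i _ => pow_pos (hx i) _)⟩

variable [Fintype σ]

theorem IsHomogeneous.dotProduct_gradient [CommSemiring R] {p : MvPolynomial σ R} {d : ℕ}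
    (hp : p.IsHomogeneous d) (x : σ → R) : x ⬝ᵥ gradient p x = d * eval x p := by
  simpa [dotProduct, gradient, nsmul_eq_mul] using congrArg (eval x) hp.sum_X_mul_pderiv

theorem IsHomogeneous.hessian_mulVec_self [CommRing R] {p : MvPolynomial σ R} {d : ℕ}
    (hp : p.IsHomogeneous d) (x : σ → R) :
    hessian p x *ᵥ x = ((d - 1 : ℕ) : R) • gradient p x := by
  ext i
  simpa [hessian, gradient, mulVec, dotProduct, pderiv_pderiv_comm i, mul_comm] using
    (hp.pderiv (i := i)).dotProduct_gradient x

theorem hasDerivAt_eval_add_smul (p : MvPolynomial σ ℝ) (z v : σ → ℝ) (s : ℝ) :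
    HasDerivAt (fun s => eval (z + s • v) p) (gradient p (z + s • v) ⬝ᵥ v) s := by
  induction p using MvPolynomial.induction_on with
  | C a => simpa [gradient, dotProduct] using hasDerivAt_const s a
  | add p q hp hq =>
    simpa [gradient, dotProduct, add_mul, Finset.sum_add_distrib] using hp.fun_add hq
  | mul_X p j hp =>
    have hX : HasDerivAt (fun s : ℝ => z j + s * v j) (v j) s := by
      simpa using ((hasDerivAt_id s).mul_const (v j)).const_add (z j)
    simp only [map_mul, eval_X, Pi.add_apply, Pi.smul_apply, smul_eq_mul]
    refine (hp.fun_mul hX).congr_deriv ?_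
    simp only [gradient, dotProduct, pderiv_mul, pderiv_X, Pi.single_apply, map_add, map_mul,
      eval_X, mul_ite, mul_one, mul_zero, apply_ite (eval _), map_zero, ite_mul, zero_mul, add_mul,
      Finset.sum_add_distrib, Finset.sum_ite_eq, Finset.mem_univ, if_true, Finset.sum_mul,
      Pi.add_apply, Pi.smul_apply, smul_eq_mul]
    congr 1
    exact Finset.sum_congr rfl fun _ _ => by ring

theorem hasDerivAt_gradient_dotProduct (p : MvPolynomial σ ℝ) (z v : σ → ℝ) (s : ℝ) :
    HasDerivAt (fun s => gradient p (z + s • v) ⬝ᵥ v) (v ⬝ᵥ hessian p (z + s • v) *ᵥ v) s := by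
  refine (HasDerivAt.fun_sum fun i (_ : i ∈ Finset.univ) =>
    (hasDerivAt_eval_add_smul (pderiv i p) z v s).mul_const (v i)).congr_deriv ?_
  simp only [dotProduct, mulVec, hessian, gradient, of_apply, Finset.mul_sum, Finset.sum_mul]
  exact Finset.sum_congr rfl fun i _ => Finset.sum_congr rfl fun j _ => by
    rw [pderiv_pderiv_comm]; ring

theorem concaveOn_log_eval_iff {S : Set (σ → ℝ)} (hSo : IsOpen S) (hSc : Convex ℝ S)
    {p : MvPolynomial σ ℝ} (hp : ∀ x ∈ S, 0 < eval x p) :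
    ConcaveOn ℝ S (fun x => Real.log (eval x p)) ↔
      ∀ x ∈ S, ∀ v, eval x p * (v ⬝ᵥ hessian p x *ᵥ v) ≤ (gradient p x ⬝ᵥ v) ^ 2 := by
  have hline : ∀ z v : σ → ℝ,
      ConcaveOn ℝ ((fun s : ℝ => z + s • v) ⁻¹' S) (fun s => Real.log (eval (z + s • v) p)) ↔
        ∀ s, z + s • v ∈ S → eval (z + s • v) p * (v ⬝ᵥ hessian p (z + s • v) *ᵥ v) ≤
          (gradient p (z + s • v) ⬝ᵥ v) ^ 2 :=
    fun z v => concaveOn_log_iff_mul_le_sq (hSo.preimage (by fun_prop))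
      (hSc.preimage_add_smul z v) (fun s hs => hp _ hs)
      (fun s _ => hasDerivAt_eval_add_smul p z v s)
      (fun s _ => hasDerivAt_gradient_dotProduct p z v s)
  rw [concaveOn_iff_forall_line hSc]
  constructor
  · intro h x hx v
    simpa using (hline x v).1 (h x hx v) 0 (by simpa using hx)
  · exact fun h z _ v => (hline z v).2 fun s hs => h _ hs v

theorem IsHomogeneous.card_pos_eigenvalues_hessian_le_one_iff [DecidableEq σ]
    {p : MvPolynomial σ ℝ} {d : ℕ} (hp : p.IsHomogeneous d) {x : σ → ℝ} (hx : 0 < eval x p) :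
    (Finset.univ.filter fun i => 0 < (isHermitian_hessian p x).eigenvalues i).card ≤ 1 ↔
      ∀ v, eval x p * (v ⬝ᵥ hessian p x *ᵥ v) ≤ (gradient p x ⬝ᵥ v) ^ 2 := by
  have hH := isHermitian_hessian p x
  constructor
  · intro h v
    rcases le_or_gt d 1 with hd | hd
    · rw [hp.hessian_eq_zero hd, zero_mulVec, dotProduct_zero, mul_zero]
      positivity
    have hd2 : (2 : ℝ) ≤ d := by exact_mod_cast hd
    have hd' : ((d - 1 : ℕ) : ℝ) = d - 1 := by rw [Nat.cast_sub (by omega), Nat.cast_one]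
    have hxx : x ⬝ᵥ hessian p x *ᵥ x = (d - 1) * (d * eval x p) := by
      rw [hp.hessian_mulVec_self, dotProduct_smul, hp.dotProduct_gradient, hd', smul_eq_mul]
    have hxv : x ⬝ᵥ hessian p x *ᵥ v = (d - 1) * (gradient p x ⬝ᵥ v) := by
      rw [hH.dotProduct_mulVec_comm_s18, hp.hessian_mulVec_self, dotProduct_smul, hd', smul_eq_mul,
        dotProduct_comm]
    have := hH.mul_le_sq_of_card_pos_eigenvalues_le_one h (u := x)
      (by rw [hxx]; exact mul_pos (by linarith) (mul_pos (by linarith) hx)) v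
    rw [hxx, hxv, mul_pow, sq (d - 1 : ℝ), mul_assoc, mul_assoc, mul_assoc] at this
    have := le_of_mul_le_mul_left this (by linarith)
    nlinarith [sq_nonneg (gradient p x ⬝ᵥ v)]
  · intro h
    refine hH.card_pos_eigenvalues_le_one_iff.2 ⟨gradient p x, fun w hw => ?_⟩
    have := h w
    rw [hw] at this
    nlinarith

end MvPolynomial

theorem stmt18 (n d : ℕ) (p : MvPolynomial (Fin n) ℝ)
    (hhom : p.IsHomogeneous d) (hnn : ∀ m, 0 ≤ coeff m p) :
    -- log-concavity of `p` on the positive orthant ...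
    (∀ x y : Fin n → ℝ, (∀ i, 0 < x i) → (∀ i, 0 < y i) → ∀ t : ℝ, 0 ≤ t → t ≤ 1 →
        (eval x p) ^ t * (eval y p) ^ (1 - t) ≤
          eval (fun i => t * x i + (1 - t) * y i) p)
    ↔
    -- ... iff the Hessian has at most one positive eigenvalue at every positive point
    (∀ x : Fin n → ℝ, (∀ i, 0 < x i) →
      ∀ hH : (Matrix.of fun i j =>
          eval x (pderiv i (pderiv j p)) : Matrix (Fin n) (Fin n) ℝ).IsHermitian,
        (Finset.univ.filter fun i => 0 < hH.eigenvalues i).card ≤ 1) := by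
  rcases eq_or_ne p 0 with rfl | hp
  · refine iff_of_true (fun x y _ _ t _ _ => ?_) (fun x _ hH => ?_)
    · simp [← Real.rpow_add' le_rfl (show t + (1 - t) ≠ 0 by norm_num)]
    · exact hH.card_pos_eigenvalues_le_one_iff.2 ⟨0, fun w _ => by simp [mulVec, dotProduct]⟩
  set Ω : Set (Fin n → ℝ) := {x | ∀ i, 0 < x i}
  have hΩo : IsOpen Ω := by
    simpa only [Ω, Set.ofPred_forall] using
      isOpen_iInter_of_finite fun i => isOpen_lt continuous_const (continuous_apply i)
  have hΩc : Convex ℝ Ω := convex_iff_forall_pos.2 fun x hx y hy a b ha hb _ i =>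
    add_pos (mul_pos ha (hx i)) (mul_pos hb (hy i))
  have hpos : ∀ x ∈ Ω, 0 < eval x p := fun x hx => eval_pos_of_ne_zero hnn hp hx
  refine (concaveOn_log_iff_rpow_mul_rpow_le hΩc hpos).symm.trans <|
    (concaveOn_log_eval_iff hΩo hΩc hpos).trans ?_
  exact forall₂_congr fun x hx =>
    (hhom.card_pos_eigenvalues_hessian_le_one_iff (hpos x hx)).symm.trans
      ⟨fun h _ => h, fun h => h _⟩
end
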